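/- arXiv:math/0212061 — 11 statements merged into one kernel-verified Lean document; each statement's English description precedes it below -/
import Mathlib

section
/- Let p be a prime, R a commutative ring, and φ : R → R a lift of Frobenius. Then for every a ∈ R and every integer m ≥ 1 there exist elements a_1, …, a_m ∈ R such that φ^m(a) = a^{p^m} + p·a_1^{p^{m−1}} + p²·a_2^{p^{m−2}} + ⋯ + p^m·a_m, where φ^m is the m-fold composite of φ and p denotes the image of the integer p in R. -/
/-!
Write `φ^[m] a` as the Witt ghost component `∑_{i ≤ m} p^i c_i^{p^(m-i)}` with `c_0 = a`. Applying `φ`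
turns each `c_i` into `c_i^p + p·(…)`, and a congruence modulo `p` becomes one modulo `p^(k+1)` after
raising to the power `p^k`; so `φ` of the sum agrees modulo `p^(m+1)` with the same sum one level up,
and the discrepancy supplies `c_(m+1)`.
-/

open Finset

theorem pow_succ_dvd_pow_pow_sub_pow_pow {R : Type*} [CommRing R] {p : ℕ} {x y : R}
    (h : (p : R) ∣ y - x ^ p) (k : ℕ) : (p : R) ^ (k + 1) ∣ y ^ p ^ k - x ^ p ^ (k + 1) := by
  simpa only [← pow_mul, ← pow_succ'] using dvd_sub_pow_of_dvd_sub h k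

section FrobeniusLift

variable {R : Type*} [CommRing R] {p : ℕ} {φ : R →+* R}

theorem pow_succ_dvd_map_sum_sub_sum (hφ : ∀ x, (p : R) ∣ φ x - x ^ p) (c : ℕ → R) (m : ℕ) :
    (p : R) ^ (m + 1) ∣
      φ (∑ i ∈ range (m + 1), (p : R) ^ i * c i ^ p ^ (m - i)) -
        ∑ i ∈ range (m + 1), (p : R) ^ i * c i ^ p ^ (m + 1 - i) := by
  rw [map_sum, ← sum_sub_distrib]
  refine dvd_sum fun i hi => ?_
  have hi : i ≤ m := Nat.lt_succ_iff.mp (mem_range.mp hi)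
  have hsplit : (p : R) ^ (m + 1) = (p : R) ^ i * (p : R) ^ (m - i + 1) := by
    rw [← pow_add, ← add_assoc, Nat.add_sub_cancel' hi]
  rw [Nat.sub_add_comm hi, hsplit, map_mul, map_pow, map_pow, map_natCast, ← mul_sub]
  exact mul_dvd_mul_left _ (pow_succ_dvd_pow_pow_sub_pow_pow (hφ (c i)) (m - i))

theorem exists_iterate_eq_sum (hφ : ∀ x, (p : R) ∣ φ x - x ^ p) (a : R) (m : ℕ) :
    ∃ c : ℕ → R, c 0 = a ∧ (⇑φ)^[m] a = ∑ i ∈ range (m + 1), (p : R) ^ i * c i ^ p ^ (m - i) := by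
  induction m with
  | zero => exact ⟨fun _ => a, rfl, by simp⟩
  | succ m ih =>
    obtain ⟨c, hc0, hc⟩ := ih
    obtain ⟨z, hz⟩ := pow_succ_dvd_map_sum_sub_sum hφ c m
    refine ⟨Function.update c (m + 1) z, by simp [hc0], ?_⟩
    have hlow : ∀ i ∈ range (m + 1), (p : R) ^ i * Function.update c (m + 1) z i ^ p ^ (m + 1 - i) =
        (p : R) ^ i * c i ^ p ^ (m + 1 - i) := fun i hi => by
      rw [Function.update_of_ne (mem_range.mp hi).ne]
    rw [sum_range_succ, sum_congr rfl hlow, Function.update_self, Nat.sub_self, pow_zero, pow_one,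
      Function.iterate_succ_apply', hc, ← hz, add_sub_cancel]

end FrobeniusLift

theorem stmt_1_general (p : ℕ) (R : Type*) [CommRing R] (φ : R →+* R)
    (hφ : ∀ a : R, ∃ b : R, φ a = a ^ p + (p : R) * b)
    (a : R) (m : ℕ) :
    ∃ c : ℕ → R,
      (⇑φ)^[m] a = a ^ (p ^ m) + ∑ i ∈ Finset.Icc 1 m, (p : R) ^ i * (c i) ^ (p ^ (m - i)) := by
  have hdvd : ∀ x, (p : R) ∣ φ x - x ^ p := fun x => by
    obtain ⟨b, hb⟩ := hφ x
    exact ⟨b, by rw [hb, add_sub_cancel_left]⟩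
  obtain ⟨c, hc0, hc⟩ := exists_iterate_eq_sum hdvd a m
  refine ⟨c, ?_⟩
  rw [hc, range_eq_Ico, sum_eq_sum_Ico_succ_bot (Nat.zero_lt_succ m), zero_add, Nat.succ_eq_add_one,
    Ico_add_one_right_eq_Icc, hc0, pow_zero, one_mul, Nat.sub_zero]

/-- If `φ : R → R` is a lift of Frobenius (a ring endomorphism with
`φ(a) ≡ a^p mod p` for all `a`), then for every `a ∈ R` and `m ≥ 1` there are
elements `a_1, …, a_m ∈ R` with
`φ^m(a) = a^{p^m} + p·a_1^{p^{m-1}} + p²·a_2^{p^{m-2}} + ⋯ + p^m·a_m`. -/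
theorem stmt_1 (p : ℕ) (hp : p.Prime) (R : Type*) [CommRing R] (φ : R →+* R)
    (hφ : ∀ a : R, ∃ b : R, φ a = a ^ p + (p : R) * b)
    (a : R) (m : ℕ) (hm : 1 ≤ m) :
    ∃ c : ℕ → R,
      (⇑φ)^[m] a = a ^ (p ^ m) + ∑ i ∈ Finset.Icc 1 m, (p : R) ^ i * (c i) ^ (p ^ (m - i)) :=
  stmt_1_general p R φ hφ a m
end

section
/- Let p be a prime, R a commutative ring, φ : R → R a lift of Frobenius, M an R-module and D : R → M a derivation over ℤ (an additive map with D(ab) = a·D(b) + b·D(a)). Then for every a ∈ R and every integer m ≥ 1 one has D(φ^m(a)) ∈ p^m·M, i.e. there exists y ∈ M with D(φ^m(a)) = p^m·y. -/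
/-!
Any `σ`-twisted derivation `E` kills `p`, so `E (φ a) = E (a ^ p + p b) = p (σ a ^ (p - 1) E a + E b)`:
one application of a lift of Frobenius gains a factor `p`. To iterate, note that `E ∘ φ` is again a
twisted derivation (twisted by `σ ∘ φ`) whose values lie in `p` times the span of the values of `E`;
induction on `m` over all twisted derivations then gives `E (φ^m a) ∈ p^m • span (range E)`.
-/

open Pointwise Submodule

def IsFrobeniusLift {R : Type*} [CommRing R] (p : ℕ) (φ : R →+* R) : Prop :=
  ∀ a : R, ∃ b : R, φ a = a ^ p + (p : R) * b

/-- For `σ = RingHom.id R` these are the derivations over `ℤ`. -/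
def IsTwistedDerivation {R S M : Type*} [CommRing R] [CommRing S] [AddCommGroup M] [Module S M]
    (σ : R →+* S) (E : R →+ M) : Prop :=
  ∀ a b : R, E (a * b) = σ a • E b + σ b • E a

namespace IsTwistedDerivation

variable {R S M : Type*} [CommRing R] [CommRing S] [AddCommGroup M] [Module S M]
  {σ : R →+* S} {E : R →+ M}

theorem map_one (hE : IsTwistedDerivation σ E) : E 1 = 0 := by
  simpa using hE 1 1

theorem map_natCast (hE : IsTwistedDerivation σ E) (n : ℕ) : E n = 0 := by
  rw [← nsmul_one, map_nsmul, hE.map_one, smul_zero]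

theorem map_pow (hE : IsTwistedDerivation σ E) (a : R) (n : ℕ) :
    E (a ^ n) = (n : S) • σ a ^ (n - 1) • E a := by
  induction n with
  | zero => simp [hE.map_one]
  | succ n ih =>
    rw [pow_succ, hE, ih, _root_.map_pow, smul_smul]
    rcases n with _ | n
    · simp
    · simp only [Nat.add_sub_cancel, smul_smul, ← add_smul]
      congr 1
      push_cast
      ring

theorem comp (hE : IsTwistedDerivation σ E) (φ : R →+* R) :
    IsTwistedDerivation (σ.comp φ) (E.comp φ.toAddMonoidHom) := fun a b => by
  simpa using hE (φ a) (φ b)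

theorem map_frobeniusLift_mem {p : ℕ} {φ : R →+* R} (hE : IsTwistedDerivation σ E)
    (hφ : IsFrobeniusLift p φ) (a : R) : E (φ a) ∈ (p : S) • span S (Set.range E) := by
  obtain ⟨b, hb⟩ := hφ a
  have hEφa : E (φ a) = (p : S) • (σ a ^ (p - 1) • E a + E b) := by
    rw [hb, map_add, hE, hE.map_natCast, smul_zero, add_zero, hE.map_pow, _root_.map_natCast, smul_add]
  rw [hEφa]
  exact smul_mem_pointwise_smul _ _ _ <|
    add_mem (smul_mem _ _ (subset_span (Set.mem_range_self a))) (subset_span (Set.mem_range_self b))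

theorem map_iterate_frobeniusLift_mem {p : ℕ} {φ : R →+* R} (hE : IsTwistedDerivation σ E)
    (hφ : IsFrobeniusLift p φ) (m : ℕ) (a : R) :
    E (φ^[m] a) ∈ (p : S) ^ m • span S (Set.range E) := by
  induction m generalizing σ E with
  | zero => simpa using subset_span (Set.mem_range_self a)
  | succ m ih =>
    have hspan : span S (Set.range (E.comp φ.toAddMonoidHom)) ≤ (p : S) • span S (Set.range E) :=
      span_le.mpr <| Set.range_subset_iff.mpr fun b => hE.map_frobeniusLift_mem hφ b
    rw [Function.iterate_succ_apply', pow_succ, ← smul_smul]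
    exact smul_le_smul_left _ hspan (ih (hE.comp φ))

end IsTwistedDerivation

theorem stmt_2_general (p : ℕ) (R : Type*) [CommRing R]
    (M : Type*) [AddCommGroup M] [Module R M]
    (φ : R →+* R) (hφ : ∀ a : R, ∃ b : R, φ a = a ^ p + (p : R) * b)
    (D : R → M)
    (Dadd : ∀ a b : R, D (a + b) = D a + D b)
    (Dmul : ∀ a b : R, D (a * b) = a • D b + b • D a)
    (a : R) (m : ℕ) :
    ∃ y : M, D ((⇑φ)^[m] a) = (p : R) ^ m • y := by
  have hD : IsTwistedDerivation (RingHom.id R) (AddMonoidHom.mk' D Dadd) := Dmul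
  obtain ⟨y, -, hy⟩ := (mem_smul_pointwise_iff_exists _ _ _).mp
    (hD.map_iterate_frobeniusLift_mem hφ m a)
  exact ⟨y, hy.symm⟩

/-- If `φ : R → R` is a lift of Frobenius, `M` an `R`-module and `D : R → M` a
derivation over `ℤ`, then `D(φ^m(a)) ∈ p^m·M` for every `a ∈ R` and `m ≥ 1`. -/
theorem stmt_2 (p : ℕ) (hp : p.Prime) (R : Type*) [CommRing R]
    (M : Type*) [AddCommGroup M] [Module R M]
    (φ : R →+* R) (hφ : ∀ a : R, ∃ b : R, φ a = a ^ p + (p : R) * b)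
    (D : R → M)
    (Dadd : ∀ a b : R, D (a + b) = D a + D b)
    (Dmul : ∀ a b : R, D (a * b) = a • D b + b • D a)
    (a : R) (m : ℕ) (hm : 1 ≤ m) :
    ∃ y : M, D ((⇑φ)^[m] a) = (p : R) ^ m • y :=
  stmt_2_general p R M φ hφ D Dadd Dmul a m
end

section
/- Let p be a prime, R a commutative ring, and M an R-module which is p-adically separated, i.e. the intersection over all m ≥ 0 of the submodules p^m·M is zero. Let φ : R → R be a lift of Frobenius, let t_1, …, t_n ∈ R, let δ_1, …, δ_n : R → R be derivations over ℤ, and for each i let D_i : M → M be an additive map satisfying the Leibniz rule D_i(a·x) = δ_i(a)·x + a·D_i(x) for all a ∈ R, x ∈ M. Let F : M → M be an additive map which is φ-semilinear (F(a·x) = φ(a)·F(x)) and horizontal, meaning D_i(F(x)) = Σ_{j=1}^n δ_i(φ(t_j))·F(D_j(x)) for all x ∈ M and all i. If e ∈ M satisfies F(e) = e, then D_i(e) = 0 for all i = 1, …, n. -/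
/-!
Applying the horizontality identity to `e = F e` expresses each `D_i e` as a combination of the
`F (D_j e)` with coefficients `δ_i (φ t_j)`. For a lift of Frobenius these coefficients are
divisible by `p`, since `δ_i (a ^ p + p b) = p (a ^ (p - 1) δ_i a + δ_i b)`, and `F` commutes with
multiplication by `p` because `φ p = p`. Hence `D_i e ∈ p ^ m M` for every `m` by induction, and
`p`-adic separatedness forces `D_i e = 0`.
-/

theorem Derivation.map_pow_add_natCast_mul {A R M : Type*} [CommSemiring A] [CommSemiring R]
    [Algebra A R] [AddCommMonoid M] [Module R M] [Module A M] [IsScalarTower A R M]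
    (d : Derivation A R M) (p : ℕ) (a b : R) :
    d (a ^ p + p * b) = (p : R) • (a ^ (p - 1) • d a + d b) := by
  rw [map_add, Derivation.leibniz, Derivation.leibniz_pow, d.map_natCast, smul_zero, add_zero,
    smul_add]
  simp only [Nat.cast_smul_eq_nsmul]

section FixedPoints

variable {ι R M : Type*} [Fintype ι] [CommRing R] [AddCommGroup M] [Module R M]
  {φ : R →+* R} {r : R} {F : M → M} {D : ι → M → M} {A : ι → ι → R}

theorem exists_eq_pow_smul_of_apply_eq_self (hr : φ r = r)
    (hF : ∀ (a : R) (x : M), F (a • x) = φ a • F x)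
    (hhor : ∀ (x : M) (i : ι), D i (F x) = ∑ j, A i j • F (D j x))
    (hA : ∀ i j, ∃ c, A i j = r * c) {e : M} (he : F e = e) (m : ℕ) (i : ι) :
    ∃ y, D i e = r ^ m • y := by
  induction m generalizing i with
  | zero => exact ⟨D i e, by rw [pow_zero, one_smul]⟩
  | succ m ih =>
    choose y hy using ih
    choose c hc using hA
    refine ⟨∑ j, c i j • F (y j), ?_⟩
    calc D i e = D i (F e) := by rw [he]
      _ = ∑ j, A i j • F (D j e) := hhor e i
      _ = ∑ j, r ^ (m + 1) • c i j • F (y j) := by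
          refine Finset.sum_congr rfl fun j _ => ?_
          rw [hc, hy, hF, map_pow, hr, smul_smul, smul_smul]
          ring_nf
      _ = r ^ (m + 1) • ∑ j, c i j • F (y j) := Finset.smul_sum.symm

theorem apply_eq_zero_of_apply_eq_self (hsep : ∀ x : M, (∀ m : ℕ, ∃ y : M, x = r ^ m • y) → x = 0)
    (hr : φ r = r) (hF : ∀ (a : R) (x : M), F (a • x) = φ a • F x)
    (hhor : ∀ (x : M) (i : ι), D i (F x) = ∑ j, A i j • F (D j x))
    (hA : ∀ i j, ∃ c, A i j = r * c) {e : M} (he : F e = e) (i : ι) : D i e = 0 :=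
  hsep _ fun m => exists_eq_pow_smul_of_apply_eq_self hr hF hhor hA he m i

end FixedPoints

theorem stmt_3_general (p : ℕ)
    (R : Type*) [CommRing R] (M : Type*) [AddCommGroup M] [Module R M]
    (hsep : ∀ x : M, (∀ m : ℕ, ∃ y : M, x = (p : R) ^ m • y) → x = 0)
    (φ : R →+* R) (hφ : ∀ a : R, ∃ b : R, φ a = a ^ p + (p : R) * b)
    (n : ℕ) (t : Fin n → R)
    (δ : Fin n → R → R)
    (hδadd : ∀ i, ∀ a b : R, δ i (a + b) = δ i a + δ i b)
    (hδmul : ∀ i, ∀ a b : R, δ i (a * b) = a * δ i b + b * δ i a)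
    (D : Fin n → M → M)
    (F : M → M)
    (hFsemi : ∀ (a : R) (x : M), F (a • x) = φ a • F x)
    (hhor : ∀ (x : M) (i : Fin n), D i (F x) = ∑ j, δ i (φ (t j)) • F (D j x))
    (e : M) (he : F e = e) :
    ∀ i, D i e = 0 := by
  let d (i : Fin n) : Derivation ℤ R R :=
    Derivation.mk' (AddMonoidHom.mk' (δ i) (hδadd i)).toIntLinearMap (hδmul i)
  have hdiv (i j : Fin n) : ∃ c, δ i (φ (t j)) = p * c := by
    obtain ⟨b, hb⟩ := hφ (t j)
    exact ⟨_, by rw [hb]; exact (d i).map_pow_add_natCast_mul p (t j) b⟩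
  exact apply_eq_zero_of_apply_eq_self hsep (map_natCast φ p) hFsemi hhor hdiv he

/-- Abstract form of the Lemma: a section of an `F`-crystal fixed by `F(φ)φ*`
is flat for the connection. Here `R` is a commutative ring, `M` a `p`-adically
separated `R`-module, `φ` a lift of Frobenius, `δ_1,…,δ_n` derivations of `R`,
`D_1,…,D_n` maps on `M` satisfying the Leibniz rule over the `δ_i`, and
`F : M → M` a `φ`-semilinear horizontal map. If `F(e) = e` then `D_i(e) = 0`
for all `i`. -/
theorem stmt_3 (p : ℕ) (hp : p.Prime)
    (R : Type*) [CommRing R] (M : Type*) [AddCommGroup M] [Module R M]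
    (hsep : ∀ x : M, (∀ m : ℕ, ∃ y : M, x = (p : R) ^ m • y) → x = 0)
    (φ : R →+* R) (hφ : ∀ a : R, ∃ b : R, φ a = a ^ p + (p : R) * b)
    (n : ℕ) (t : Fin n → R)
    (δ : Fin n → R → R)
    (hδadd : ∀ i, ∀ a b : R, δ i (a + b) = δ i a + δ i b)
    (hδmul : ∀ i, ∀ a b : R, δ i (a * b) = a * δ i b + b * δ i a)
    (D : Fin n → M → M)
    (hDadd : ∀ i, ∀ x y : M, D i (x + y) = D i x + D i y)
    (hDleib : ∀ i, ∀ (a : R) (x : M), D i (a • x) = δ i a • x + a • D i x)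
    (F : M → M)
    (hFadd : ∀ x y : M, F (x + y) = F x + F y)
    (hFsemi : ∀ (a : R) (x : M), F (a • x) = φ a • F x)
    (hhor : ∀ (x : M) (i : Fin n), D i (F x) = ∑ j, δ i (φ (t j)) • F (D j x))
    (e : M) (he : F e = e) :
    ∀ i, D i e = 0 :=
  stmt_3_general p R M hsep φ hφ n t δ hδadd hδmul D F hFsemi hhor e he
end

section
/- Let p be a prime, N ≥ 1 an integer, and w : {0, …, N−1} → ℕ a weight function. Let L be an N×N matrix with entries in ℤ_p (viewed inside ℚ_p) which is block-unipotent with respect to w, i.e. L_{ii} = 1 for all i and L_{ij} = 0 whenever i ≠ j and w(i) ≥ w(j). Let P be the N×N diagonal matrix over ℚ_p with entries P_{ii} = p^{w(i)}. Then the sequence of partial products G_M = (P^{−M} L P^{M})·(P^{−(M−1)} L P^{M−1})⋯(P^{−1} L P) (factors ordered from right to left for increasing m) converges as M → ∞ in the space of N×N matrices over ℚ_p, with the entrywise topology coming from the p-adic norm on ℚ_p. -/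
/-!
Conjugation by `P^k` multiplies the entry `L i j` by `p^(k (w j - w i))`. Block-unipotence
kills every entry with `w j ≤ w i` off the diagonal, so `P^{-k} L P^k = 1 + O(p^{-k})` in the
entrywise sup norm, which over an ultrametric field is submultiplicative. Hence all partial
products have norm at most `‖G 0‖`, consecutive ones differ by `O(p^{-M})`, and the sequence is
Cauchy in the complete space of matrices over `ℚ_p`.
-/

open Matrix

attribute [local instance] Matrix.normedAddCommGroup

namespace Matrix

variable {R l m n : Type*} [Fintype l] [Fintype m] [Fintype n]

theorem norm_mul_le_of_isUltrametricDist [NormedRing R] [IsUltrametricDist R]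
    (A : Matrix l m R) (B : Matrix m n R) : ‖A * B‖ ≤ ‖A‖ * ‖B‖ := by
  rw [norm_le_iff (by positivity)]
  intro i j
  refine IsUltrametricDist.norm_sum_le_of_forall_le_of_nonneg (by positivity) fun k _ => ?_
  exact (norm_mul_le _ _).trans
    (mul_le_mul (norm_entry_le_entrywise_sup_norm A) (norm_entry_le_entrywise_sup_norm B)
      (norm_nonneg _) (norm_nonneg _))

abbrev ultrametricNormedRing [NormedRing R] [IsUltrametricDist R] [DecidableEq n] :
    NormedRing (Matrix n n R) :=
  { Matrix.normedAddCommGroup, Matrix.instRing with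
    norm_mul_le := norm_mul_le_of_isUltrametricDist }

theorem diagonal_zpow {K : Type*} [Field K] [DecidableEq n] {d : n → K} (hd : ∀ i, d i ≠ 0)
    (z : ℤ) : diagonal d ^ z = diagonal fun i => d i ^ z := by
  obtain ⟨k, rfl | rfl⟩ := z.eq_nat_or_neg
  · simp [zpow_natCast, diagonal_pow]
  · have hunit : IsUnit (diagonal d).det := by
      simpa [det_diagonal, Finset.prod_ne_zero_iff] using hd
    rw [zpow_neg hunit, zpow_natCast, diagonal_pow]
    refine inv_eq_right_inv ?_
    rw [diagonal_mul_diagonal, ← diagonal_one]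
    congr 1
    funext i
    simp [hd i]

end Matrix

theorem cauchySeq_of_succ_eq_mul {E : Type*} [NormedRing E] {a G : ℕ → E} {C r : ℝ}
    (hr : r < 1) (ha : ∀ M, ‖a M‖ ≤ 1) (ha_sub : ∀ M, ‖a M - 1‖ ≤ C * r ^ M)
    (hG : ∀ M, G (M + 1) = a M * G M) : CauchySeq G := by
  have hG_le : ∀ M, ‖G M‖ ≤ ‖G 0‖ := by
    intro M
    induction M with
    | zero => rfl
    | succ M ih =>
      calc ‖G (M + 1)‖ ≤ ‖a M‖ * ‖G M‖ := hG M ▸ norm_mul_le _ _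
        _ ≤ 1 * ‖G 0‖ := mul_le_mul (ha M) ih (norm_nonneg _) zero_le_one
        _ = ‖G 0‖ := one_mul _
  refine cauchySeq_of_le_geometric r (C * ‖G 0‖) hr fun M => ?_
  calc dist (G M) (G (M + 1)) = ‖(a M - 1) * G M‖ := by
        rw [dist_eq_norm', hG M, sub_mul, one_mul]
    _ ≤ ‖a M - 1‖ * ‖G M‖ := norm_mul_le _ _
    _ ≤ C * r ^ M * ‖G 0‖ :=
        mul_le_mul (ha_sub M) (hG_le M) (norm_nonneg _) ((norm_nonneg _).trans (ha_sub M))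
    _ = C * ‖G 0‖ * r ^ M := by ring

structure Matrix.IsBlockUnipotent {R n : Type*} [Zero R] [One R] (w : n → ℕ) (L : Matrix n n R) :
    Prop where
  apply_self : ∀ i, L i i = 1
  apply_eq_zero : ∀ i j, i ≠ j → w j ≤ w i → L i j = 0

section WeightDiagonal

variable {p : ℕ} [Fact p.Prime] {n : Type*} [Fintype n] [DecidableEq n]

variable (p) in
noncomputable def weightDiagonal (w : n → ℕ) : Matrix n n ℚ_[p] :=
  diagonal fun i => (p : ℚ_[p]) ^ w i

theorem weightDiagonal_zpow (w : n → ℕ) (z : ℤ) :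
    weightDiagonal p w ^ z = diagonal fun i => (p : ℚ_[p]) ^ (z * w i) := by
  have hp : (p : ℚ_[p]) ≠ 0 := Nat.cast_ne_zero.mpr (Fact.out : p.Prime).ne_zero
  rw [weightDiagonal, diagonal_zpow fun i => pow_ne_zero _ hp]
  simp_rw [← zpow_natCast, ← _root_.zpow_mul, mul_comm]

theorem weightDiagonal_conj_apply (w : n → ℕ) (L : Matrix n n ℚ_[p]) (z : ℤ) (i j : n) :
    (weightDiagonal p w ^ (-z) * L * weightDiagonal p w ^ z) i j
      = (p : ℚ_[p]) ^ (z * (w j - w i)) * L i j := by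
  have hp : (p : ℚ_[p]) ≠ 0 := Nat.cast_ne_zero.mpr (Fact.out : p.Prime).ne_zero
  rw [weightDiagonal_zpow, weightDiagonal_zpow, mul_assoc, diagonal_mul, mul_diagonal,
    mul_left_comm, ← zpow_add₀ hp]
  ring_nf

theorem norm_weightDiagonal_conj_apply_le {w : n → ℕ} {L : Matrix n n ℚ_[p]}
    (hL : L.IsBlockUnipotent w) (hL_int : ∀ i j, ‖L i j‖ ≤ 1) (k : ℕ) {i j : n} (hij : i ≠ j) :
    ‖(weightDiagonal p w ^ (-(k : ℤ)) * L * weightDiagonal p w ^ (k : ℤ)) i j‖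
      ≤ (p : ℝ)⁻¹ ^ k := by
  rw [weightDiagonal_conj_apply]
  rcases le_or_gt (w j) (w i) with hw | hw
  · rw [hL.apply_eq_zero i j hij hw, mul_zero, norm_zero]
    positivity
  have hp : (1 : ℝ) ≤ p := mod_cast (Fact.out : p.Prime).one_le
  calc ‖(p : ℚ_[p]) ^ ((k : ℤ) * (w j - w i)) * L i j‖
      ≤ ‖(p : ℚ_[p]) ^ ((k : ℤ) * (w j - w i))‖ * 1 := by
        rw [norm_mul]; exact mul_le_mul_of_nonneg_left (hL_int i j) (norm_nonneg _)
    _ = (p : ℝ) ^ (-((k : ℤ) * (w j - w i))) := by rw [mul_one, Padic.norm_p_zpow]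
    _ ≤ (p : ℝ) ^ (-(k : ℤ)) := by
        refine zpow_le_zpow_right₀ hp (neg_le_neg ?_)
        have : (1 : ℤ) ≤ w j - w i := by omega
        nlinarith
    _ = (p : ℝ)⁻¹ ^ k := by rw [_root_.zpow_neg, zpow_natCast, inv_pow]

theorem weightDiagonal_conj_apply_self {w : n → ℕ} {L : Matrix n n ℚ_[p]}
    (hL : L.IsBlockUnipotent w) (z : ℤ) (i : n) :
    (weightDiagonal p w ^ (-z) * L * weightDiagonal p w ^ z) i i = 1 := by
  simp [weightDiagonal_conj_apply, hL.apply_self]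

theorem norm_weightDiagonal_conj_sub_one_le {w : n → ℕ} {L : Matrix n n ℚ_[p]}
    (hL : L.IsBlockUnipotent w) (hL_int : ∀ i j, ‖L i j‖ ≤ 1) (k : ℕ) :
    ‖weightDiagonal p w ^ (-(k : ℤ)) * L * weightDiagonal p w ^ (k : ℤ) - 1‖
      ≤ (p : ℝ)⁻¹ ^ k := by
  rw [norm_le_iff (by positivity)]
  intro i j
  rcases eq_or_ne i j with rfl | hij
  · rw [Matrix.sub_apply, weightDiagonal_conj_apply_self hL, one_apply_eq, sub_self, norm_zero]
    positivity
  · simpa [one_apply_ne hij] using norm_weightDiagonal_conj_apply_le hL hL_int k hij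

theorem norm_weightDiagonal_conj_le_one {w : n → ℕ} {L : Matrix n n ℚ_[p]}
    (hL : L.IsBlockUnipotent w) (hL_int : ∀ i j, ‖L i j‖ ≤ 1) (k : ℕ) :
    ‖weightDiagonal p w ^ (-(k : ℤ)) * L * weightDiagonal p w ^ (k : ℤ)‖ ≤ 1 := by
  rw [norm_le_iff zero_le_one]
  intro i j
  rcases eq_or_ne i j with rfl | hij
  · rw [weightDiagonal_conj_apply_self hL, norm_one]
  · refine (norm_weightDiagonal_conj_apply_le hL hL_int k hij).trans ?_
    have hp : (1 : ℝ) ≤ p := mod_cast (Fact.out : p.Prime).one_le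
    exact pow_le_one₀ (by positivity) (inv_le_one_of_one_le₀ hp)

end WeightDiagonal

attribute [local instance] Matrix.ultrametricNormedRing

theorem stmt_4_general (p : ℕ) [hp : Fact p.Prime] (N : ℕ)
    (w : Fin N → ℕ)
    (L : Matrix (Fin N) (Fin N) ℚ_[p])
    (hLint : ∀ i j, ‖L i j‖ ≤ 1)
    (hLdiag : ∀ i, L i i = 1)
    (hLunip : ∀ i j, i ≠ j → w j ≤ w i → L i j = 0)
    (P : Matrix (Fin N) (Fin N) ℚ_[p])
    (hP : P = Matrix.diagonal fun i => (p : ℚ_[p]) ^ (w i))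
    (G : ℕ → Matrix (Fin N) (Fin N) ℚ_[p])
    (hGrec : ∀ M : ℕ, G (M + 1) = (P ^ (-(M + 1 : ℤ)) * L * P ^ (M + 1 : ℤ)) * G M) :
    ∃ Glim : Matrix (Fin N) (Fin N) ℚ_[p],
      Filter.Tendsto G Filter.atTop (nhds Glim) := by
  have hL : L.IsBlockUnipotent w := ⟨hLdiag, hLunip⟩
  have hP' : P = weightDiagonal p w := hP
  have hp1 : (1 : ℝ) < p := mod_cast hp.out.one_lt
  refine cauchySeq_tendsto_of_complete <| cauchySeq_of_succ_eq_mul (inv_lt_one_of_one_lt₀ hp1)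
    (fun M => norm_weightDiagonal_conj_le_one hL hLint (M + 1))
    (fun M => (norm_weightDiagonal_conj_sub_one_le hL hLint (M + 1)).trans_eq (pow_succ' _ _))
    fun M => ?_
  rw [hGrec M, hP']
  push_cast
  rfl

/-- Convergence of the partial products
`G_M = (P^{-M} L P^M)·(P^{-(M-1)} L P^{M-1})⋯(P^{-1} L P)` for a block-unipotent
matrix `L` with `ℤ_p`-entries and `P = diag(p^{w(i)})`, in the space of `N×N`
matrices over `ℚ_p` with the entrywise `p`-adic topology. -/
theorem stmt_4 (p : ℕ) [hp : Fact p.Prime] (N : ℕ) (hN : 1 ≤ N)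
    (w : Fin N → ℕ)
    (L : Matrix (Fin N) (Fin N) ℚ_[p])
    (hLint : ∀ i j, ‖L i j‖ ≤ 1)
    (hLdiag : ∀ i, L i i = 1)
    (hLunip : ∀ i j, i ≠ j → w j ≤ w i → L i j = 0)
    (P : Matrix (Fin N) (Fin N) ℚ_[p])
    (hP : P = Matrix.diagonal fun i => (p : ℚ_[p]) ^ (w i))
    (G : ℕ → Matrix (Fin N) (Fin N) ℚ_[p])
    (hG0 : G 0 = 1)
    (hGrec : ∀ M : ℕ, G (M + 1) = (P ^ (-(M + 1 : ℤ)) * L * P ^ (M + 1 : ℤ)) * G M) :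
    ∃ Glim : Matrix (Fin N) (Fin N) ℚ_[p],
      Filter.Tendsto G Filter.atTop (nhds Glim) :=
  stmt_4_general p (hp := hp) N w L hLint hLdiag hLunip P hP G hGrec
end

section
/- Let p be a prime and k a perfect field of characteristic p, with ring of Witt vectors W = 𝕎(k) and Frobenius ring endomorphism σ : W → W. Let N ≥ 1, let w : {0, …, N−1} → ℕ be a weight function, let L be an N×N matrix over W which is block-unipotent with respect to w (L_{ii} = 1 for all i, and L_{ij} = 0 whenever i ≠ j and w(i) ≥ w(j)), and let P be the diagonal matrix with P_{ii} = p^{w(i)}. Then there exists a unique N×N matrix T over W which is block-unipotent with respect to w and satisfies P·σ(T) = T·L·P, where σ(T) denotes the matrix obtained by applying σ to each entry of T. Moreover this unique T satisfies T_{ij} ∈ p^{w(j)−w(i)}·W whenever w(i) < w(j). -/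
/-!
On the entries with `w i < w j` the equation `P σ(T) = T L P` reads
`σ (T i j) = p ^ (w j - w i) * (T L) i j`, which can be solved for `T i j` by applying `σ⁻¹`;
all other entries of a block-unipotent `T` are forced. The resulting self-map of matrices,
`T ↦ σ⁻¹ (p ^ (w j - w i) * (T L) i j)` above the blocks and `δ i j` elsewhere, turns a congruence
modulo `p ^ n` into one modulo `p ^ (n + 1)`, so by `p`-adic completeness of `𝕎(k)` it has a unique
fixed point; its fixed points are exactly the block-unipotent solutions, and the factor
`p ^ (w j - w i)` in front of `σ⁻¹` is the claimed divisibility.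
-/

open Matrix

section AdicFixedPoint

variable {R M : Type*} [CommRing R] {I : Ideal R} [AddCommGroup M] [Module R M]

theorem Submodule.mem_smul_top_pi_iff {ι : Type*} [Finite ι] (J : Ideal R) (x : ι → M) :
    x ∈ (J • ⊤ : Submodule R (ι → M)) ↔ ∀ i, x i ∈ (J • ⊤ : Submodule R M) := by
  refine ⟨fun hx i => Submodule.smul_top_le_comap_smul_top J (LinearMap.proj i) hx, fun hx => ?_⟩
  classical
  cases nonempty_fintype ι
  rw [← Finset.univ_sum_single x]
  exact Submodule.sum_mem _ fun i _ =>
    Submodule.smul_top_le_comap_smul_top J (LinearMap.single R (fun _ => M) i) (hx i)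

theorem smodEq_pi_iff {ι : Type*} [Finite ι] (J : Ideal R) {x y : ι → M} :
    x ≡ y [SMOD (J • ⊤ : Submodule R (ι → M))] ↔
      ∀ i, x i ≡ y i [SMOD (J • ⊤ : Submodule R M)] := by
  simp only [SModEq.sub_mem, Submodule.mem_smul_top_pi_iff, Pi.sub_apply]

instance IsAdicComplete.pi {ι : Type*} [Finite ι] [IsAdicComplete I M] :
    IsAdicComplete I (ι → M) where
  haus' x hx := funext fun i =>
    IsHausdorff.haus' (I := I) (x i) fun n => (smodEq_pi_iff _).1 (hx n) i
  prec' f hf := by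
    choose L hL using fun i => IsPrecomplete.prec' (I := I) (fun n => f n i)
      fun hmn => (smodEq_pi_iff _).1 (hf hmn) i
    exact ⟨L, fun n => (smodEq_pi_iff _).2 fun i => hL i n⟩

theorem smodEq_pow_zero_smul_top (x y : M) : x ≡ y [SMOD (I ^ 0 • ⊤ : Submodule R M)] := by
  rw [pow_zero, Ideal.one_eq_top, Submodule.top_smul]
  exact SModEq.top

theorem IsAdicComplete.existsUnique_fixedPoint [IsAdicComplete I M] {F : M → M}
    (hF : ∀ n x y, x ≡ y [SMOD (I ^ n • ⊤ : Submodule R M)] →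
      F x ≡ F y [SMOD (I ^ (n + 1) • ⊤ : Submodule R M)]) :
    ∃! x, F x = x := by
  have hstep : ∀ n, F^[n] 0 ≡ F^[n + 1] 0 [SMOD (I ^ n • ⊤ : Submodule R M)] := by
    intro n
    induction n with
    | zero => exact smodEq_pow_zero_smul_top _ _
    | succ n ih => simpa only [Function.iterate_succ_apply'] using hF n _ _ ih
  have hcauchy : ∀ {m n}, m ≤ n → F^[m] 0 ≡ F^[n] 0 [SMOD (I ^ m • ⊤ : Submodule R M)] := by
    intro m n hmn
    induction n, hmn using Nat.le_induction with
    | base => rfl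
    | succ n hmn ih => exact ih.trans ((hstep n).mono (Submodule.pow_smul_top_le I M hmn))
  obtain ⟨x, hx⟩ := IsPrecomplete.prec inferInstance hcauchy
  have hfix : F x = x := IsHausdorff.eq_iff_smodEq.2 fun n => by
    have hFx : F x ≡ F^[n + 1] 0 [SMOD (I ^ (n + 1) • ⊤ : Submodule R M)] := by
      rw [Function.iterate_succ_apply']
      exact hF n _ _ (hx n).symm
    exact (hFx.trans (hx (n + 1))).mono (Submodule.pow_smul_top_le I M n.le_succ)
  refine ⟨x, hfix, fun y hy => (IsHausdorff.eq_iff_smodEq (I := I)).2 fun n => ?_⟩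
  induction n with
  | zero => exact smodEq_pow_zero_smul_top _ _
  | succ n ih => simpa only [hy, hfix] using hF n y x ih

end AdicFixedPoint

theorem smodEq_span_singleton_pow_iff_dvd {R : Type*} [CommRing R] (π : R) (n : ℕ) {x y : R} :
    x ≡ y [SMOD (Ideal.span {π} ^ n • ⊤ : Submodule R R)] ↔ π ^ n ∣ x - y := by
  rw [SModEq.sub_mem, smul_eq_mul, Ideal.mul_top, Ideal.span_singleton_pow,
    Ideal.mem_span_singleton]

namespace Matrix

section Adic

variable {m n R : Type*} [CommRing R] [Finite m] [Finite n]

instance isAdicComplete {I : Ideal R} [IsAdicComplete I R] : IsAdicComplete I (Matrix m n R) :=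
  inferInstanceAs (IsAdicComplete I (m → n → R))

theorem smodEq_span_singleton_pow_iff_dvd (π : R) (k : ℕ) {A B : Matrix m n R} :
    A ≡ B [SMOD (Ideal.span {π} ^ k • ⊤ : Submodule R (Matrix m n R))] ↔
      ∀ i j, π ^ k ∣ A i j - B i j :=
  (smodEq_pi_iff (M := n → R) _).trans <| forall_congr' fun _ =>
    (smodEq_pi_iff _).trans <| forall_congr' fun _ => _root_.smodEq_span_singleton_pow_iff_dvd π k

end Adic

section BlockUnipotent

variable {n α R : Type*} [LinearOrder α]

structure IsBlockUnipotent_s5 [Zero R] [One R] (w : n → α) (A : Matrix n n R) : Prop where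
  apply_self : ∀ i, A i i = 1
  apply_eq_zero : ∀ i j, i ≠ j → w j ≤ w i → A i j = 0

variable [DecidableEq n] {w : n → α}

theorem IsBlockUnipotent_s5.apply_of_le [Zero R] [One R] {A : Matrix n n R}
    (hA : IsBlockUnipotent_s5 w A) {i j : n} (h : w j ≤ w i) : A i j = (1 : Matrix n n R) i j := by
  rcases eq_or_ne i j with rfl | hij
  · rw [hA.apply_self, one_apply_eq]
  · rw [one_apply_ne hij, hA.apply_eq_zero i j hij h]

theorem IsBlockUnipotent_s5.mul_apply_of_le [Fintype n] [Semiring R] {A B : Matrix n n R}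
    (hA : IsBlockUnipotent_s5 w A) (hB : IsBlockUnipotent_s5 w B) {i j : n} (h : w j ≤ w i) :
    (A * B) i j = (1 : Matrix n n R) i j := by
  rw [mul_apply, Finset.sum_eq_single i]
  · rw [hA.apply_self, one_mul, hB.apply_of_le h]
  · intro m _ hmi
    rcases le_or_gt (w m) (w i) with hm | hm
    · rw [hA.apply_eq_zero i m (Ne.symm hmi) hm, zero_mul]
    · have hmj : m ≠ j := by rintro rfl; exact absurd h hm.not_ge
      rw [hB.apply_eq_zero m j hmj (h.trans hm.le), mul_zero]
  · simp

end BlockUnipotent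

section FrobeniusEquation

variable {n R : Type*} [Fintype n] [DecidableEq n] [CommRing R] {w : n → ℕ} {π : R}

theorem IsBlockUnipotent_s5.diagonal_mul_map_eq_iff [IsDomain R] (σ : R →+* R) (hπ : π ≠ 0)
    {T L : Matrix n n R} (hT : IsBlockUnipotent_s5 w T) (hL : IsBlockUnipotent_s5 w L) :
    diagonal (fun i => π ^ w i) * T.map σ = T * L * diagonal (fun i => π ^ w i) ↔
      ∀ i j, w i < w j → σ (T i j) = π ^ (w j - w i) * (T * L) i j := by
  have hlower : ∀ i j, w j ≤ w i → π ^ w i * σ (T i j) = (T * L) i j * π ^ w j := by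
    intro i j h
    rw [hT.apply_of_le h, hT.mul_apply_of_le hL h]
    rcases eq_or_ne i j with rfl | hij
    · simp
    · simp [one_apply_ne hij]
  have hupper : ∀ i j, w i < w j → (π ^ w i * σ (T i j) = (T * L) i j * π ^ w j ↔
      σ (T i j) = π ^ (w j - w i) * (T * L) i j) := by
    intro i j h
    rw [← pow_sub_mul_pow π h.le,
      show (T * L) i j * (π ^ (w j - w i) * π ^ w i) = π ^ w i * (π ^ (w j - w i) * (T * L) i j)
        by ring]
    exact mul_right_inj' (pow_ne_zero _ hπ)
  simp only [← Matrix.ext_iff, diagonal_mul, mul_diagonal, map_apply]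
  refine ⟨fun h i j hij => (hupper i j hij).1 (h i j), fun h i j => ?_⟩
  rcases lt_or_ge (w i) (w j) with hij | hij
  · exact (hupper i j hij).2 (h i j hij)
  · exact hlower i j hij

def periodMap (σ : R ≃+* R) (π : R) (w : n → ℕ) (L T : Matrix n n R) : Matrix n n R :=
  of fun i j => if w i < w j then σ.symm (π ^ (w j - w i) * (T * L) i j) else (1 : Matrix n n R) i j

variable {σ : R ≃+* R}

theorem periodMap_eq_self_iff [IsDomain R] (hπ : π ≠ 0) {T L : Matrix n n R}
    (hL : IsBlockUnipotent_s5 w L) :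
    periodMap σ π w L T = T ↔ IsBlockUnipotent_s5 w T ∧
      diagonal (fun i => π ^ w i) * T.map σ = T * L * diagonal (fun i => π ^ w i) := by
  refine Matrix.ext_iff.symm.trans ?_
  simp only [periodMap, of_apply]
  constructor
  · intro h
    have hT : IsBlockUnipotent_s5 w T :=
      ⟨fun i => by simpa using (h i i).symm,
        fun i j hij hle => by simpa [not_lt.2 hle, one_apply_ne hij] using (h i j).symm⟩
    refine ⟨hT, (hT.diagonal_mul_map_eq_iff σ.toRingHom hπ hL).2 fun i j hij => ?_⟩
    have := h i j
    rw [if_pos hij, σ.symm_apply_eq] at this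
    exact this.symm
  · rintro ⟨hT, hTL⟩ i j
    have hup := (hT.diagonal_mul_map_eq_iff σ.toRingHom hπ hL).1 hTL
    split_ifs with hij
    · exact σ.symm_apply_eq.2 (hup i j hij).symm
    · exact (hT.apply_of_le (not_lt.1 hij)).symm

theorem periodMap_smodEq (hσπ : σ π = π) (L : Matrix n n R) (k : ℕ) (A B : Matrix n n R)
    (h : A ≡ B [SMOD (Ideal.span {π} ^ k • ⊤ : Submodule R (Matrix n n R))]) :
    periodMap σ π w L A ≡ periodMap σ π w L B
      [SMOD (Ideal.span {π} ^ (k + 1) • ⊤ : Submodule R (Matrix n n R))] := by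
  rw [smodEq_span_singleton_pow_iff_dvd] at h ⊢
  have hσπ' : σ.symm π = π := σ.symm_apply_eq.2 hσπ.symm
  intro i j
  simp only [periodMap, of_apply]
  split_ifs with hij
  · have hAB : π ^ k ∣ ((A - B) * L) i j :=
      Finset.dvd_sum fun m _ => dvd_mul_of_dvd_left (h i m) _
    rw [← map_sub, ← mul_sub, ← sub_apply, ← Matrix.sub_mul, map_mul, map_pow, hσπ',
      pow_succ']
    refine mul_dvd_mul (dvd_pow_self π (by omega)) ?_
    simpa [map_pow, hσπ'] using map_dvd σ.symm hAB
  · simp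

theorem dvd_of_periodMap_eq_self (hσπ : σ π = π) {T L : Matrix n n R}
    (hT : periodMap σ π w L T = T) {i j : n} (hij : w i < w j) : π ^ (w j - w i) ∣ T i j := by
  rw [← hT, periodMap, of_apply, if_pos hij, map_mul, map_pow, σ.symm_apply_eq.2 hσπ.symm]
  exact dvd_mul_right _ _

end FrobeniusEquation

end Matrix

theorem stmt_5_general (p : ℕ) [Fact p.Prime] (k : Type*) [Field k] [CharP k p]
    [PerfectRing k p]
    (N : ℕ) (w : Fin N → ℕ)
    (L : Matrix (Fin N) (Fin N) (WittVector p k))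
    (hLdiag : ∀ i, L i i = 1)
    (hLunip : ∀ i j, i ≠ j → w j ≤ w i → L i j = 0) :
    ∃ T : Matrix (Fin N) (Fin N) (WittVector p k),
      ((∀ i, T i i = 1) ∧ (∀ i j, i ≠ j → w j ≤ w i → T i j = 0) ∧
        Matrix.diagonal (fun i => (p : WittVector p k) ^ (w i)) *
            T.map (WittVector.frobenius) =
          T * L * Matrix.diagonal (fun i => (p : WittVector p k) ^ (w i))) ∧
      (∀ i j, w i < w j → ∃ c : WittVector p k,
        T i j = (p : WittVector p k) ^ (w j - w i) * c) ∧
      (∀ T' : Matrix (Fin N) (Fin N) (WittVector p k),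
        ((∀ i, T' i i = 1) ∧ (∀ i j, i ≠ j → w j ≤ w i → T' i j = 0) ∧
          Matrix.diagonal (fun i => (p : WittVector p k) ^ (w i)) *
              T'.map (WittVector.frobenius) =
            T' * L * Matrix.diagonal (fun i => (p : WittVector p k) ^ (w i))) →
        T' = T) := by
  have hσp : WittVector.frobeniusEquiv p k p = p := map_natCast _ p
  have hL : IsBlockUnipotent_s5 w L := ⟨hLdiag, hLunip⟩
  have hp := WittVector.p_nonzero p k
  obtain ⟨T, hT, huniq⟩ := IsAdicComplete.existsUnique_fixedPoint
    (I := Ideal.span {(p : WittVector p k)}) (periodMap_smodEq (w := w) hσp L)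
  obtain ⟨⟨hTdiag, hTunip⟩, hTeq⟩ := (periodMap_eq_self_iff hp hL).1 hT
  refine ⟨T, ⟨hTdiag, hTunip, hTeq⟩, fun i j hij => dvd_of_periodMap_eq_self hσp hT hij, ?_⟩
  rintro T' ⟨hT'diag, hT'unip, hT'eq⟩
  exact huniq T' ((periodMap_eq_self_iff hp hL).2 ⟨⟨hT'diag, hT'unip⟩, hT'eq⟩)

/-- Over the Witt vectors `W = 𝕎(k)` of a perfect field `k` of characteristic `p`,
given a block-unipotent matrix `L` (w.r.t. a weight function `w`) and
`P = diag(p^{w(i)})`, there is a unique block-unipotent matrix `T` over `W` with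
`P·σ(T) = T·L·P`; moreover `T_{ij} ∈ p^{w(j)-w(i)}·W` whenever `w(i) < w(j)`. -/
theorem stmt_5 (p : ℕ) [Fact p.Prime] (k : Type*) [Field k] [CharP k p]
    [PerfectRing k p]
    (N : ℕ) (hN : 1 ≤ N) (w : Fin N → ℕ)
    (L : Matrix (Fin N) (Fin N) (WittVector p k))
    (hLdiag : ∀ i, L i i = 1)
    (hLunip : ∀ i j, i ≠ j → w j ≤ w i → L i j = 0) :
    ∃ T : Matrix (Fin N) (Fin N) (WittVector p k),
      ((∀ i, T i i = 1) ∧ (∀ i j, i ≠ j → w j ≤ w i → T i j = 0) ∧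
        Matrix.diagonal (fun i => (p : WittVector p k) ^ (w i)) *
            T.map (WittVector.frobenius) =
          T * L * Matrix.diagonal (fun i => (p : WittVector p k) ^ (w i))) ∧
      (∀ i j, w i < w j → ∃ c : WittVector p k,
        T i j = (p : WittVector p k) ^ (w j - w i) * c) ∧
      (∀ T' : Matrix (Fin N) (Fin N) (WittVector p k),
        ((∀ i, T' i i = 1) ∧ (∀ i j, i ≠ j → w j ≤ w i → T' i j = 0) ∧
          Matrix.diagonal (fun i => (p : WittVector p k) ^ (w i)) *
              T'.map (WittVector.frobenius) =
            T' * L * Matrix.diagonal (fun i => (p : WittVector p k) ^ (w i))) →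
        T' = T) :=
  stmt_5_general p k N w L hLdiag hLunip
end

section
/- Let p be a prime and k an algebraically closed field of characteristic p, with ring of Witt vectors W = 𝕎(k) and Frobenius endomorphism σ : W → W. Then for every unit c ∈ W^× there exists a unit b ∈ W^× such that σ(b) = c·b, i.e. c = σ(b)·b^{−1}. -/
/-!
Apply `WittVector.frobeniusRotation` to the pair `(1, c)`: over an algebraically closed field it
solves `σ(b) = c·b` coefficient by coefficient, each step being a polynomial equation of positive
degree in the next coefficient. Its constant coefficient is a root of `x ^ (p - 1) = c₀ ≠ 0`,
so `b` is a unit.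
-/

namespace WittVector

variable {p : ℕ} [Fact p.Prime] {k : Type*} [Field k]

theorem coeff_zero_ne_zero_of_isUnit {x : WittVector p k} (hx : IsUnit x) : x.coeff 0 ≠ 0 :=
  (constantCoeff.isUnit_map hx).ne_zero

theorem isUnit_frobeniusRotation [CharP k p] [IsAlgClosed k] {a₁ a₂ : WittVector p k}
    (ha₁ : a₁.coeff 0 ≠ 0) (ha₂ : a₂.coeff 0 ≠ 0) : IsUnit (frobeniusRotation p ha₁ ha₂) :=
  isUnit_of_coeff_zero_ne_zero _ <| by
    simpa [frobeniusRotation, frobeniusRotationCoeff] using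
      RecursionBase.solution_nonzero p ha₁ ha₂

end WittVector

/-- For `k` algebraically closed of characteristic `p` with Witt vectors
`W = 𝕎(k)` and Frobenius `σ`, every unit `c ∈ W^×` can be written as
`c = σ(b)·b^{-1}` for some unit `b ∈ W^×`. -/
theorem stmt_8 (p : ℕ) [Fact p.Prime] (k : Type*) [Field k] [IsAlgClosed k]
    [CharP k p] (c : (WittVector p k)ˣ) :
    ∃ b : (WittVector p k)ˣ,
      WittVector.frobenius (b : WittVector p k) = (c : WittVector p k) * (b : WittVector p k) := by
  have h1 : (1 : WittVector p k).coeff 0 ≠ 0 := WittVector.coeff_zero_ne_zero_of_isUnit isUnit_one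
  have hc : (c : WittVector p k).coeff 0 ≠ 0 := WittVector.coeff_zero_ne_zero_of_isUnit c.isUnit
  obtain ⟨b, hb⟩ := WittVector.isUnit_frobeniusRotation h1 hc
  refine ⟨b, ?_⟩
  rw [hb, ← mul_one (WittVector.frobenius _), WittVector.frobenius_frobeniusRotation, mul_comm]
end

section
/- Let c : ℕ → ℚ be a sequence of rational numbers (indexed by n ≥ 1) and for each m ≥ 1 define C_m = (Σ_{d | m} c_d·d³)/m³, the m-th coefficient of the power series Z(q) = Σ_{n≥1} c_n·Li₃(q^n) ∈ ℚ[[q]], where Li₃(x) = Σ_{j≥1} x^j/j³ is the trilogarithm. Then the following are equivalent: (i) c_n is an integer for every n ≥ 1; (ii) for every prime p and every m ≥ 1, the rational number C_m − p^{−3}·C_{m/p} (with the convention that the term C_{m/p} is omitted, i.e. taken to be 0, when p does not divide m) has nonnegative p-adic valuation, i.e. lies in ℤ_{(p)} = {x ∈ ℚ : v_p(x) ≥ 0}. Equivalently, (ii) says that for every prime p all coefficients of the power series Z(q) − p^{−3}·Z(q^p) are p-integral. -/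
/-! If `p ∣ m`, the divisors of `m / p` are exactly the divisors of `m` of `p`-adic valuation
below `v_p(m)`. Hence `C_m − p⁻³ C_{m/p}` is the sum of `c_d (d/m)³` over the divisors `d ∣ m`
with `v_p(d) = v_p(m)` (all divisors when `p ∤ m`), and each `d/m` is then `p`-integral. So
integral `c` gives `p`-integral coefficients. Conversely the summand `d = m` is `c_m` itself:
by strong induction all other summands are `p`-integral, so `c_m` is `p`-integral for every
prime `p`, i.e. an integer. -/

open Finset

theorem padicValRat_nonneg_iff_padicNorm_le_one {p : ℕ} [Fact p.Prime] (q : ℚ) :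
    0 ≤ padicValRat p q ↔ padicNorm p q ≤ 1 := by
  rcases eq_or_ne q 0 with rfl | hq
  · simp
  rw [padicNorm.eq_zpow_of_nonzero hq,
    zpow_le_one_iff_right₀ (by exact_mod_cast (Fact.out : p.Prime).one_lt), neg_nonpos]

theorem Rat.exists_intCast_eq_of_forall_padicNorm_le_one {q : ℚ}
    (h : ∀ p : ℕ, p.Prime → padicNorm p q ≤ 1) : ∃ z : ℤ, q = z := by
  refine ⟨q.num, (Rat.den_eq_one_iff q).mp ?_ |>.symm⟩
  by_contra hden
  obtain ⟨p, hp, hpden⟩ := Nat.exists_prime_and_dvd hden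
  have := Fact.mk hp
  have hnum : ¬ (p : ℤ) ∣ q.num := fun hpnum =>
    hp.ne_one <| Nat.eq_one_of_dvd_coprimes q.reduced (Int.natCast_dvd.mp hpnum) hpden
  have hlt : padicNorm p q.den < 1 := (padicNorm.nat_lt_one_iff _).mpr hpden
  have hpos : 0 < padicNorm p q.den :=
    (padicNorm.nonneg _).lt_of_ne' (padicNorm.nonzero (Nat.cast_ne_zero.mpr q.den_ne_zero))
  have := h p hp
  rw [← Rat.num_div_den q, padicNorm.div, (padicNorm.int_eq_one_iff _).mpr hnum,
    div_le_one hpos] at this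
  exact hlt.not_ge this

section

variable {p m : ℕ}

def maxValDivisors (p m : ℕ) : Finset ℕ :=
  m.divisors.filter fun d => padicValNat p m ≤ padicValNat p d

theorem mem_maxValDivisors {d : ℕ} :
    d ∈ maxValDivisors p m ↔ d ∣ m ∧ m ≠ 0 ∧ padicValNat p m ≤ padicValNat p d := by
  rw [maxValDivisors, mem_filter, Nat.mem_divisors, and_assoc]

theorem maxValDivisors_of_not_dvd (hpm : ¬ p ∣ m) : maxValDivisors p m = m.divisors :=
  filter_true_of_mem fun _ _ => by rw [padicValNat.eq_zero_of_not_dvd hpm]; exact Nat.zero_le _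

theorem self_mem_maxValDivisors (hm : m ≠ 0) : m ∈ maxValDivisors p m :=
  mem_maxValDivisors.mpr ⟨dvd_rfl, hm, le_rfl⟩

variable [Fact p.Prime]

theorem dvd_div_prime_iff (hm : m ≠ 0) (hpm : p ∣ m) {d : ℕ} :
    d ∣ m / p ↔ d ∣ m ∧ padicValNat p d < padicValNat p m := by
  have hp : p.Prime := Fact.out
  rw [Nat.dvd_div_iff_mul_dvd hpm]
  constructor
  · rintro ⟨k, rfl⟩
    obtain ⟨hpd, hk⟩ := mul_ne_zero_iff.mp hm
    refine ⟨Dvd.intro (p * k) (by ring), ?_⟩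
    rw [padicValNat.mul hpd hk, padicValNat.mul hp.ne_zero (right_ne_zero_of_mul hpd),
      padicValNat_self]
    omega
  · rintro ⟨⟨k, rfl⟩, hlt⟩
    obtain ⟨hd, hk⟩ := mul_ne_zero_iff.mp hm
    rw [padicValNat.mul hd hk] at hlt
    rw [mul_comm p d]
    exact mul_dvd_mul_left d (dvd_of_one_le_padicValNat (by omega))

theorem divisors_div_prime (hm : m ≠ 0) (hpm : p ∣ m) :
    (m / p).divisors = m.divisors.filter fun d => ¬ padicValNat p m ≤ padicValNat p d := by
  have hmp : m / p ≠ 0 := (Nat.div_pos (Nat.le_of_dvd (Nat.pos_of_ne_zero hm) hpm)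
    (Fact.out : p.Prime).pos).ne'
  ext d
  simp only [mem_filter, Nat.mem_divisors, not_le, dvd_div_prime_iff hm hpm, ne_eq, hm, hmp,
    not_false_eq_true, and_true]

theorem padicNorm_div_pow_le_one {d : ℕ} (hd : d ∈ maxValDivisors p m) (k : ℕ) :
    padicNorm p (((d : ℚ) / m) ^ k) ≤ 1 := by
  obtain ⟨hdm, hm, hval⟩ := mem_maxValDivisors.mp hd
  have hd0 : d ≠ 0 := ne_zero_of_dvd_ne_zero hm hdm
  rw [← padicValRat_nonneg_iff_padicNorm_le_one, padicValRat.pow,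
    padicValRat.div (by exact_mod_cast hd0) (by exact_mod_cast hm),
    padicValRat.of_nat, padicValRat.of_nat]
  exact mul_nonneg (Nat.cast_nonneg k) (sub_nonneg.mpr (by exact_mod_cast hval))

theorem padicNorm_sum_le_one_of_subset_maxValDivisors {s : Finset ℕ}
    (hs : s ⊆ maxValDivisors p m) {f : ℕ → ℚ} (hf : ∀ d ∈ s, padicNorm p (f d) ≤ 1) (k : ℕ) :
    padicNorm p (∑ d ∈ s, f d * ((d : ℚ) / m) ^ k) ≤ 1 :=
  padicNorm.sum_le' (fun d hd => by
    rw [padicNorm.mul]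
    exact mul_le_one₀ (hf d hd) (padicNorm.nonneg _) (padicNorm_div_pow_le_one (hs hd) k))
    zero_le_one

theorem sub_ite_eq_sum_maxValDivisors {c C : ℕ → ℚ} {k : ℕ}
    (hC : ∀ m : ℕ, 1 ≤ m → C m = (∑ d ∈ m.divisors, c d * (d : ℚ) ^ k) / (m : ℚ) ^ k)
    (hm : 1 ≤ m) :
    C m - (if p ∣ m then (p : ℚ) ^ (-(k : ℤ)) * C (m / p) else 0) =
      ∑ d ∈ maxValDivisors p m, c d * ((d : ℚ) / m) ^ k := by
  have hm0 : m ≠ 0 := by omega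
  simp_rw [div_pow, ← mul_div_assoc, ← sum_div]
  split_ifs with hpm
  · have hp : p.Prime := Fact.out
    have hmp : 1 ≤ m / p := Nat.div_pos (Nat.le_of_dvd hm hpm) hp.pos
    have hmQ : (m : ℚ) = p * (m / p : ℕ) := by exact_mod_cast (Nat.mul_div_cancel' hpm).symm
    have hpQ : (p : ℚ) ≠ 0 := by exact_mod_cast hp.ne_zero
    have hmpQ : ((m / p : ℕ) : ℚ) ≠ 0 := by exact_mod_cast Nat.pos_iff_ne_zero.mp hmp
    rw [hC m hm, hC (m / p) hmp, divisors_div_prime hm0 hpm,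
      ← sum_filter_add_sum_filter_not m.divisors fun d => padicValNat p m ≤ padicValNat p d,
      ← maxValDivisors, hmQ, zpow_neg, zpow_natCast]
    field_simp
    ring
  · rw [sub_zero, hC m hm, maxValDivisors_of_not_dvd hpm]

end

theorem exists_intCast_eq_of_padicNorm_sum_maxValDivisors_le_one {c : ℕ → ℚ} {k : ℕ}
    (h : ∀ p : ℕ, p.Prime → ∀ m : ℕ, 1 ≤ m →
      padicNorm p (∑ d ∈ maxValDivisors p m, c d * ((d : ℚ) / m) ^ k) ≤ 1) :
    ∀ n : ℕ, 1 ≤ n → ∃ z : ℤ, c n = z := by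
  intro n
  induction n using Nat.strong_induction_on with
  | _ n ih =>
  intro hn
  apply Rat.exists_intCast_eq_of_forall_padicNorm_le_one
  intro p hp
  have := Fact.mk hp
  have hn0 : n ≠ 0 := by omega
  have hsplit := add_sum_erase (maxValDivisors p n) (fun d => c d * ((d : ℚ) / n) ^ k)
    (self_mem_maxValDivisors hn0)
  rw [div_self (by exact_mod_cast hn0), one_pow, mul_one] at hsplit
  rw [← add_sub_cancel_right (c n) (∑ d ∈ (maxValDivisors p n).erase n, _), hsplit]
  refine padicNorm.sub.trans (max_le (h p hp n hn) ?_)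
  refine padicNorm_sum_le_one_of_subset_maxValDivisors (erase_subset _ _) (fun d hd => ?_) k
  obtain ⟨hdn, hdmem⟩ := mem_erase.mp hd
  have hdvd := (mem_maxValDivisors.mp hdmem).1
  obtain ⟨z, hz⟩ := ih d (lt_of_le_of_ne (Nat.le_of_dvd hn hdvd) hdn)
    (Nat.pos_of_dvd_of_pos hdvd hn)
  rw [hz]
  exact padicNorm.of_int z

/-- For a sequence `c : ℕ → ℚ` (indexed by `n ≥ 1`) let
`C_m = (Σ_{d ∣ m} c_d·d³)/m³` be the `m`-th coefficient of
`Z(q) = Σ_{n≥1} c_n·Li₃(qⁿ)`.  Then all `c_n` are integers if and only if for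
every prime `p` and every `m ≥ 1` the rational number
`C_m − p^{-3}·C_{m/p}` (the term `C_{m/p}` being omitted when `p ∤ m`) has
nonnegative `p`-adic valuation. -/
theorem stmt_9 (c : ℕ → ℚ) (C : ℕ → ℚ)
    (hC : ∀ m : ℕ, 1 ≤ m →
      C m = (∑ d ∈ m.divisors, c d * (d : ℚ) ^ 3) / (m : ℚ) ^ 3) :
    (∀ n : ℕ, 1 ≤ n → ∃ z : ℤ, c n = (z : ℚ)) ↔
    (∀ p : ℕ, p.Prime → ∀ m : ℕ, 1 ≤ m →
      0 ≤ padicValRat p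
        (C m - (if p ∣ m then (p : ℚ) ^ (-3 : ℤ) * C (m / p) else 0))) := by
  have key : ∀ p : ℕ, p.Prime → ∀ m : ℕ, 1 ≤ m →
      (0 ≤ padicValRat p (C m - (if p ∣ m then (p : ℚ) ^ (-3 : ℤ) * C (m / p) else 0)) ↔
        padicNorm p (∑ d ∈ maxValDivisors p m, c d * ((d : ℚ) / m) ^ 3) ≤ 1) := by
    intro p hp m hm
    have := Fact.mk hp
    have hsum := sub_ite_eq_sum_maxValDivisors (p := p) hC hm
    rw [Nat.cast_ofNat] at hsum
    rw [padicValRat_nonneg_iff_padicNorm_le_one, hsum]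
  refine ⟨fun hc p hp m hm => (key p hp m hm).mpr ?_,
    fun h => exists_intCast_eq_of_padicNorm_sum_maxValDivisors_le_one
      fun p hp m hm => (key p hp m hm).mp (h p hp m hm)⟩
  have := Fact.mk hp
  refine padicNorm_sum_le_one_of_subset_maxValDivisors subset_rfl (fun d hd => ?_) 3
  obtain ⟨z, hz⟩ := hc d (Nat.pos_of_dvd_of_pos (mem_maxValDivisors.mp hd).1 hm)
  rw [hz]
  exact padicNorm.of_int z
end

section
/- Let R be a commutative ring and h ≥ 1. Let 𝒯 be the (2h+2)×(2h+2) block upper-triangular matrix over R with block sizes (1, h, h, 1): 𝒯 = [[1, τ01, τ02, τ03], [0, I_h, τ12, τ13], [0, 0, I_h, τ23], [0, 0, 0, 1]], where τ01 and τ02 are 1×h, τ03 is 1×1, τ12 is h×h, and τ13 and τ23 are h×1 matrices over R, and I_h is the h×h identity matrix. Let J be the block matrix [[0,0,0,−1],[0,0,I_h,0],[0,−I_h,0,0],[1,0,0,0]]. Then 𝒯^T·J·𝒯 = J if and only if the three relations τ01 = τ23^T, τ12 = τ12^T, and τ02 = τ23^T·τ12 − τ13^T hold; and these three relations hold if and only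 if τ12 = τ12^T and 𝒯 factors as 𝒯 = B·C, where B = [[1, τ23^T, 0, 0],[0, I_h, 0, 0],[0, 0, I_h, τ23],[0, 0, 0, 1]], C = [[1, 0, −τ13^T, Z],[0, I_h, τ12, τ13],[0, 0, I_h, 0],[0, 0, 0, 1]], and Z = τ03 − τ23^T·τ13. -/
/-! Both equivalences are block computations in the `(1, h, h, 1)` decomposition. The blocks of
`𝒯ᵀ·J·𝒯 - J` are `±(τ23 - τ01ᵀ)`, `τ12ᵀ - τ12` and `±(τ02 - τ23ᵀ·τ12 + τ13ᵀ)` and their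
transposes, while the corner block `τ03 - τ03ᵀ + τ13ᵀ·τ23 - τ23ᵀ·τ13` vanishes because a `1 × 1`
matrix is its own transpose. On the other side, `B·C` is `𝒯` with `τ01` and `τ02` replaced by
`τ23ᵀ` and `τ23ᵀ·τ12 - τ13ᵀ`. -/

open Matrix

/-- A `(2h+2)×(2h+2)` matrix built from 16 blocks of sizes `(1, h, h, 1)`. -/
def blk4 {R : Type*} [CommRing R] {h : ℕ}
    (M00 : Matrix Unit Unit R) (M01 : Matrix Unit (Fin h) R)
    (M02 : Matrix Unit (Fin h) R) (M03 : Matrix Unit Unit R)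
    (M10 : Matrix (Fin h) Unit R) (M11 : Matrix (Fin h) (Fin h) R)
    (M12 : Matrix (Fin h) (Fin h) R) (M13 : Matrix (Fin h) Unit R)
    (M20 : Matrix (Fin h) Unit R) (M21 : Matrix (Fin h) (Fin h) R)
    (M22 : Matrix (Fin h) (Fin h) R) (M23 : Matrix (Fin h) Unit R)
    (M30 : Matrix Unit Unit R) (M31 : Matrix Unit (Fin h) R)
    (M32 : Matrix Unit (Fin h) R) (M33 : Matrix Unit Unit R) :
    Matrix ((Unit ⊕ Fin h) ⊕ (Fin h ⊕ Unit)) ((Unit ⊕ Fin h) ⊕ (Fin h ⊕ Unit)) R :=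
  Matrix.fromBlocks
    (Matrix.fromBlocks M00 M01 M10 M11) (Matrix.fromBlocks M02 M03 M12 M13)
    (Matrix.fromBlocks M20 M21 M30 M31) (Matrix.fromBlocks M22 M23 M32 M33)

theorem Matrix.transpose_eq_self_of_subsingleton {n α : Type*} [Subsingleton n]
    (M : Matrix n n α) : Mᵀ = M := by
  ext i j
  rw [Subsingleton.elim i j, transpose_apply]

section
variable {R : Type*} [CommRing R] {h : ℕ}

theorem blk4_inj {M00 N00 M03 N03 M30 N30 M33 N33 : Matrix Unit Unit R}
    {M01 N01 M02 N02 M31 N31 M32 N32 : Matrix Unit (Fin h) R}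
    {M10 N10 M13 N13 M20 N20 M23 N23 : Matrix (Fin h) Unit R}
    {M11 N11 M12 N12 M21 N21 M22 N22 : Matrix (Fin h) (Fin h) R} :
    blk4 M00 M01 M02 M03 M10 M11 M12 M13 M20 M21 M22 M23 M30 M31 M32 M33 =
        blk4 N00 N01 N02 N03 N10 N11 N12 N13 N20 N21 N22 N23 N30 N31 N32 N33 ↔
      M00 = N00 ∧ M01 = N01 ∧ M02 = N02 ∧ M03 = N03 ∧
      M10 = N10 ∧ M11 = N11 ∧ M12 = N12 ∧ M13 = N13 ∧
      M20 = N20 ∧ M21 = N21 ∧ M22 = N22 ∧ M23 = N23 ∧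
      M30 = N30 ∧ M31 = N31 ∧ M32 = N32 ∧ M33 = N33 := by
  simp only [blk4, fromBlocks_inj]
  tauto

variable (τ01 τ02 : Matrix Unit (Fin h) R) (τ03 : Matrix Unit Unit R)
    (τ12 : Matrix (Fin h) (Fin h) R) (τ13 τ23 : Matrix (Fin h) Unit R)

theorem blk4_unipotent_gram :
    (blk4 1 τ01 τ02 τ03 0 1 τ12 τ13 0 0 1 τ23 0 0 0 1)ᵀ *
        blk4 0 0 0 (-1) 0 0 1 0 0 (-1) 0 0 1 0 0 0 *
        blk4 1 τ01 τ02 τ03 0 1 τ12 τ13 0 0 1 τ23 0 0 0 1 =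
      blk4 0 0 0 (-1) 0 0 1 (τ23 - τ01ᵀ) 0 (-1) (τ12ᵀ - τ12) (τ12ᵀ * τ23 - τ13 - τ02ᵀ)
        1 (τ01 - τ23ᵀ) (τ02 + τ13ᵀ - τ23ᵀ * τ12) 0 := by
  have hscalar : τ13ᵀ * τ23 = τ23ᵀ * τ13 := by
    rw [← transpose_eq_self_of_subsingleton (τ23ᵀ * τ13), transpose_mul, transpose_transpose]
  simp only [blk4, fromBlocks_transpose, fromBlocks_multiply, fromBlocks_inj,
    Matrix.mul_one, Matrix.one_mul, Matrix.mul_zero, Matrix.zero_mul,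
    add_zero, zero_add, Matrix.mul_neg, Matrix.neg_mul, transpose_zero, transpose_one,
    neg_zero, Matrix.fromBlocks_add, hscalar, transpose_eq_self_of_subsingleton τ03, true_and]
  and_intros <;> abel

theorem blk4_factor_mul :
    blk4 1 τ23ᵀ 0 0 0 1 0 0 0 0 1 τ23 0 0 0 1 *
        blk4 1 0 (-τ13ᵀ) (τ03 - τ23ᵀ * τ13) 0 1 τ12 τ13 0 0 1 0 0 0 0 1 =
      blk4 1 τ23ᵀ (τ23ᵀ * τ12 - τ13ᵀ) τ03 0 1 τ12 τ13 0 0 1 τ23 0 0 0 1 := by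
  simp only [blk4, fromBlocks_multiply, Matrix.mul_one, Matrix.one_mul, Matrix.mul_zero,
    Matrix.zero_mul, fromBlocks_zero, add_zero, zero_add, sub_add_cancel, neg_add_eq_sub]
end

theorem stmt_10_general (R : Type*) [CommRing R] (h : ℕ)
    (τ01 τ02 : Matrix Unit (Fin h) R) (τ03 : Matrix Unit Unit R)
    (τ12 : Matrix (Fin h) (Fin h) R) (τ13 τ23 : Matrix (Fin h) Unit R)
    (𝒯 J B C : Matrix ((Unit ⊕ Fin h) ⊕ (Fin h ⊕ Unit)) ((Unit ⊕ Fin h) ⊕ (Fin h ⊕ Unit)) R)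
    (h𝒯 : 𝒯 = blk4 1 τ01 τ02 τ03 0 1 τ12 τ13 0 0 1 τ23 0 0 0 1)
    (hJ : J = blk4 0 0 0 (-1) 0 0 1 0 0 (-1) 0 0 1 0 0 0)
    (hB : B = blk4 1 τ23ᵀ 0 0 0 1 0 0 0 0 1 τ23 0 0 0 1)
    (hC : C = blk4 1 0 (-τ13ᵀ) (τ03 - τ23ᵀ * τ13) 0 1 τ12 τ13 0 0 1 0 0 0 0 1) :
    (𝒯ᵀ * J * 𝒯 = J ↔ (τ01 = τ23ᵀ ∧ τ12 = τ12ᵀ ∧ τ02 = τ23ᵀ * τ12 - τ13ᵀ)) ∧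
    ((τ01 = τ23ᵀ ∧ τ12 = τ12ᵀ ∧ τ02 = τ23ᵀ * τ12 - τ13ᵀ) ↔
      (τ12 = τ12ᵀ ∧ 𝒯 = B * C)) := by
  subst h𝒯 hJ hB hC
  rw [blk4_unipotent_gram, blk4_factor_mul, blk4_inj, blk4_inj]
  simp only [true_and, and_true, sub_eq_zero]
  refine ⟨⟨?_, ?_⟩, by tauto⟩
  · rintro ⟨-, hsymm, -, h01, h02⟩
    exact ⟨h01, hsymm.symm, eq_sub_of_add_eq h02⟩
  · rintro ⟨rfl, hsymm, rfl⟩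
    refine ⟨(transpose_transpose τ23).symm, hsymm.symm, ?_, rfl, sub_add_cancel _ _⟩
    rw [transpose_sub, transpose_mul, transpose_transpose, transpose_transpose, ← hsymm]

/-- The symplectic Gramm-matrix relation `𝒯ᵀ·J·𝒯 = J` for the unipotent period
matrix `𝒯` holds iff `τ01 = τ23ᵀ`, `τ12 = τ12ᵀ` and `τ02 = τ23ᵀ·τ12 − τ13ᵀ`;
and these relations hold iff `τ12 = τ12ᵀ` and `𝒯` factors as `𝒯 = B·C` with
`Z = τ03 − τ23ᵀ·τ13`. -/
theorem stmt_10 (R : Type*) [CommRing R] (h : ℕ) (hh : 1 ≤ h)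
    (τ01 τ02 : Matrix Unit (Fin h) R) (τ03 : Matrix Unit Unit R)
    (τ12 : Matrix (Fin h) (Fin h) R) (τ13 τ23 : Matrix (Fin h) Unit R)
    (𝒯 J B C : Matrix ((Unit ⊕ Fin h) ⊕ (Fin h ⊕ Unit)) ((Unit ⊕ Fin h) ⊕ (Fin h ⊕ Unit)) R)
    (h𝒯 : 𝒯 = blk4 1 τ01 τ02 τ03 0 1 τ12 τ13 0 0 1 τ23 0 0 0 1)
    (hJ : J = blk4 0 0 0 (-1) 0 0 1 0 0 (-1) 0 0 1 0 0 0)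
    (hB : B = blk4 1 τ23ᵀ 0 0 0 1 0 0 0 0 1 τ23 0 0 0 1)
    (hC : C = blk4 1 0 (-τ13ᵀ) (τ03 - τ23ᵀ * τ13) 0 1 τ12 τ13 0 0 1 0 0 0 0 1) :
    (𝒯ᵀ * J * 𝒯 = J ↔ (τ01 = τ23ᵀ ∧ τ12 = τ12ᵀ ∧ τ02 = τ23ᵀ * τ12 - τ13ᵀ)) ∧
    ((τ01 = τ23ᵀ ∧ τ12 = τ12ᵀ ∧ τ02 = τ23ᵀ * τ12 - τ13ᵀ) ↔
      (τ12 = τ12ᵀ ∧ 𝒯 = B * C)) :=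
  stmt_10_general R h τ01 τ02 τ03 τ12 τ13 τ23 𝒯 J B C h𝒯 hJ hB hC
end

section
/- Let R be a commutative ring and δ : R → R a derivation over ℤ, applied entrywise to matrices over R. Let T and S be invertible n×n matrices over R and let M, N, N' be n×n matrices over R such that δ(T) = T·N, δ(S) = S·N', and δ(M) = M·N' − N·M. Then δ(T·M·S^{−1}) = 0, i.e. every entry of T·M·S^{−1} is annihilated by δ. -/
namespace Derivation

variable {S R : Type*} [CommSemiring S]

section Semiring

variable [CommSemiring R] [Algebra S R] (D : Derivation S R R)

theorem map_matrix_mul {m n o : Type*} [Fintype n] (A : Matrix m n R) (B : Matrix n o R) :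
    (A * B).map D = A.map D * B + A * B.map D := by
  ext i j
  simp only [Matrix.map_apply, Matrix.mul_apply, Matrix.add_apply, map_sum, leibniz, smul_eq_mul,
    ← Finset.sum_add_distrib]
  exact Finset.sum_congr rfl fun k _ => by ring

theorem map_matrix_one {n : Type*} [DecidableEq n] : (1 : Matrix n n R).map D = 0 := by
  rw [← Matrix.diagonal_one, Matrix.diagonal_map D.map_zero]
  simp only [map_one_eq_zero, Matrix.diagonal_zero]

end Semiring

theorem map_matrix_nonsing_inv [CommRing R] [Algebra S R] (D : Derivation S R R)
    {n : Type*} [Fintype n] [DecidableEq n] {A : Matrix n n R} (hA : IsUnit A.det) :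
    A⁻¹.map D = -(A⁻¹ * A.map D * A⁻¹) := by
  have hprod : A.map D * A⁻¹ + A * A⁻¹.map D = 0 := by
    rw [← map_matrix_mul, Matrix.mul_nonsing_inv A hA, map_matrix_one]
  have := congrArg (A⁻¹ * ·) hprod
  simp only [Matrix.mul_add, ← Matrix.mul_assoc, Matrix.nonsing_inv_mul A hA, Matrix.one_mul,
    Matrix.mul_zero] at this
  rw [eq_neg_iff_add_eq_zero, add_comm, this]

end Derivation

theorem stmt_12_general (R : Type*) [CommRing R] (δ : R → R)
    (hδadd : ∀ a b : R, δ (a + b) = δ a + δ b)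
    (hδmul : ∀ a b : R, δ (a * b) = a * δ b + b * δ a)
    (n : ℕ) (T S M N N' : Matrix (Fin n) (Fin n) R)
    (hS : IsUnit S.det)
    (hδT : T.map δ = T * N) (hδS : S.map δ = S * N')
    (hδM : M.map δ = M * N' - N * M) :
    (T * M * S⁻¹).map δ = 0 := by
  let D : Derivation ℤ R R := .mk' (AddMonoidHom.mk' δ hδadd).toIntLinearMap hδmul
  change (T * M * S⁻¹).map D = 0
  change T.map D = T * N at hδT
  change S.map D = S * N' at hδS
  change M.map D = M * N' - N * M at hδM
  rw [D.map_matrix_mul, D.map_matrix_mul, D.map_matrix_nonsing_inv hS, hδT, hδM, hδS,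
    ← Matrix.mul_assoc S⁻¹, Matrix.nonsing_inv_mul S hS, Matrix.one_mul]
  noncomm_ring

/-- If `δ` is a derivation of `R` (applied entrywise to matrices), `T` and `S`
are invertible `n×n` matrices and `M, N, N'` matrices over `R` with
`δ(T) = T·N`, `δ(S) = S·N'` and `δ(M) = M·N' − N·M`, then
`δ(T·M·S⁻¹) = 0`, i.e. every entry of `T·M·S⁻¹` is annihilated by `δ`. -/
theorem stmt_12 (R : Type*) [CommRing R] (δ : R → R)
    (hδadd : ∀ a b : R, δ (a + b) = δ a + δ b)
    (hδmul : ∀ a b : R, δ (a * b) = a * δ b + b * δ a)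
    (n : ℕ) (T S M N N' : Matrix (Fin n) (Fin n) R)
    (hT : IsUnit T.det) (hS : IsUnit S.det)
    (hδT : T.map δ = T * N) (hδS : S.map δ = S * N')
    (hδM : M.map δ = M * N' - N * M) :
    (T * M * S⁻¹).map δ = 0 :=
  stmt_12_general R δ hδadd hδmul n T S M N N' hS hδT hδS hδM
end

section
/- Let p be a prime, R a commutative ring in which the image of p is invertible, φ : R → R a ring endomorphism (applied entrywise to matrices), and h ≥ 1. Let τ23 and τ13 be h×1 matrices, τ12 an h×h matrix, and Z a 1×1 matrix over R, and define the (2h+2)×(2h+2) matrix (block sizes (1, h, h, 1)) 𝒯 = B·C, where B = [[1, τ23^T, 0, 0],[0, I_h, 0, 0],[0, 0, I_h, τ23],[0, 0, 0, 1]] and C = [[1, 0, −τ13^T, Z],[0, I_h, τ12, τ13],[0, 0, I_h, 0],[0, 0, 0, 1]]. Let P = diag(1, p·I_h, p²·I_h, p³). Assume φ(τ23) = p·τ23 (entrywise). Then P·φ(𝒯) = 𝒯·U·P, where U = [[1, 0, τ13^T − p^{−2}·φ(τ13^T), p^{−3}·φ(Z) − Z],[0, I_h, p^{−1}·φ(τ12)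 − τ12, p^{−2}·φ(τ13) − τ13],[0, 0, I_h, 0],[0, 0, 0, 1]]. In particular, the entry of U·P (equivalently, of 𝒯^{−1}·P·φ(𝒯)) in row 0 and column 2h+1 equals φ(Z) − p³·Z. -/
/-!
Split the index set as `(1, h) ⊕ (h, 1)`. Then `B` is block diagonal with blocks
`[[1, τ23ᵀ], [0, 1]]` and `[[1, τ23], [0, 1]]`, while `C` and `U` are block unipotent
`[[1, X], [0, 1]]`; such matrices multiply by adding their corner blocks, and a
block-diagonal `D = diag(D₁, D₂)` moves past them via
`D · [[1, X], [0, 1]] = [[1, X'], [0, 1]] · D` as soon as `D₁ X = X' D₂`.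
Since `τ23` sits exactly one step off the diagonal of `P = diag(1, p, p², p³)`, the hypothesis
`φ(τ23) = p τ23` gives `P φ(B) = B P`. The corner of `U` is `D₁ φ(X) D₂⁻¹ - X` for `X` the
corner of `C`, so `P φ(C) = C U P`. Hence `P φ(B C) = B P φ(C) = B C U P`.
-/

open Matrix

namespace Matrix

section BlockUnipotent

variable {l m α : Type*}

theorem fromBlocks_diag_mul_fromBlocks_diag [Fintype l] [Fintype m] [Semiring α]
    (A A' : Matrix l l α) (D D' : Matrix m m α) :
    fromBlocks A 0 0 D * fromBlocks A' 0 0 D' = fromBlocks (A * A') 0 0 (D * D') := by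
  simp [fromBlocks_multiply]

variable [DecidableEq l] [DecidableEq m]

def blockUnipotent [Zero α] [One α] (X : Matrix l m α) : Matrix (l ⊕ m) (l ⊕ m) α :=
  fromBlocks 1 X 0 1

theorem blockUnipotent_map [Zero α] [One α] {β : Type*} [Zero β] [One β] (X : Matrix l m α)
    (f : α → β) (h₀ : f 0 = 0) (h₁ : f 1 = 1) :
    (blockUnipotent X).map f = blockUnipotent (X.map f) := by
  simp [blockUnipotent, fromBlocks_map, Matrix.map_one f h₀ h₁, h₀]

variable [Fintype l] [Fintype m] [Semiring α]

theorem blockUnipotent_mul_blockUnipotent (X Y : Matrix l m α) :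
    blockUnipotent X * blockUnipotent Y = blockUnipotent (X + Y) := by
  simp [blockUnipotent, fromBlocks_multiply, add_comm]

theorem fromBlocks_diag_mul_blockUnipotent (D₁ : Matrix l l α) (D₂ : Matrix m m α)
    (X : Matrix l m α) :
    fromBlocks D₁ 0 0 D₂ * blockUnipotent X = fromBlocks D₁ (D₁ * X) 0 D₂ := by
  simp [blockUnipotent, fromBlocks_multiply]

theorem blockUnipotent_mul_fromBlocks_diag (D₁ : Matrix l l α) (D₂ : Matrix m m α)
    (X : Matrix l m α) :
    blockUnipotent X * fromBlocks D₁ 0 0 D₂ = fromBlocks D₁ (X * D₂) 0 D₂ := by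
  simp [blockUnipotent, fromBlocks_multiply]

theorem fromBlocks_diag_mul_blockUnipotent_eq {D₁ : Matrix l l α} {D₂ : Matrix m m α}
    {X X' : Matrix l m α} (h : D₁ * X = X' * D₂) :
    fromBlocks D₁ 0 0 D₂ * blockUnipotent X = blockUnipotent X' * fromBlocks D₁ 0 0 D₂ := by
  rw [fromBlocks_diag_mul_blockUnipotent, blockUnipotent_mul_fromBlocks_diag, h]

end BlockUnipotent

end Matrix

section PeriodMatrix

variable {R : Type*} [CommRing R] {h : ℕ}

def weightScale (c : R) :
    Matrix ((Unit ⊕ Fin h) ⊕ (Fin h ⊕ Unit)) ((Unit ⊕ Fin h) ⊕ (Fin h ⊕ Unit)) R :=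
  blk4 1 0 0 0 0 (c • 1) 0 0 0 0 (c ^ 2 • 1) 0 0 0 0 (c ^ 3 • 1)

def periodB (τ23 : Matrix (Fin h) Unit R) :
    Matrix ((Unit ⊕ Fin h) ⊕ (Fin h ⊕ Unit)) ((Unit ⊕ Fin h) ⊕ (Fin h ⊕ Unit)) R :=
  blk4 1 τ23ᵀ 0 0 0 1 0 0 0 0 1 τ23 0 0 0 1

def periodC (τ12 : Matrix (Fin h) (Fin h) R) (τ13 : Matrix (Fin h) Unit R)
    (Z : Matrix Unit Unit R) :
    Matrix ((Unit ⊕ Fin h) ⊕ (Fin h ⊕ Unit)) ((Unit ⊕ Fin h) ⊕ (Fin h ⊕ Unit)) R :=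
  blk4 1 0 (-τ13ᵀ) Z 0 1 τ12 τ13 0 0 1 0 0 0 0 1

def frobCorrection (φ : R →+* R) (c : R) [Invertible c] (τ12 : Matrix (Fin h) (Fin h) R)
    (τ13 : Matrix (Fin h) Unit R) (Z : Matrix Unit Unit R) :
    Matrix ((Unit ⊕ Fin h) ⊕ (Fin h ⊕ Unit)) ((Unit ⊕ Fin h) ⊕ (Fin h ⊕ Unit)) R :=
  blk4 1 0 (τ13ᵀ - (⅟c) ^ 2 • (τ13ᵀ.map φ)) ((⅟c) ^ 3 • (Z.map φ) - Z)
    0 1 ((⅟c) • (τ12.map φ) - τ12) ((⅟c) ^ 2 • (τ13.map φ) - τ13)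
    0 0 1 0
    0 0 0 1

theorem blk4_eq_fromBlocks_blockUnipotent (x : Matrix Unit (Fin h) R)
    (y : Matrix (Fin h) Unit R) :
    blk4 1 x 0 0 0 1 0 0 0 0 1 y 0 0 0 1 =
      fromBlocks (blockUnipotent x) 0 0 (blockUnipotent y) := by
  simp only [blk4, blockUnipotent, fromBlocks_zero]

theorem blk4_eq_blockUnipotent (a : Matrix Unit (Fin h) R) (b : Matrix Unit Unit R)
    (c : Matrix (Fin h) (Fin h) R) (d : Matrix (Fin h) Unit R) :
    blk4 1 0 a b 0 1 c d 0 0 1 0 0 0 0 1 = blockUnipotent (fromBlocks a b c d) := by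
  simp only [blk4, blockUnipotent, fromBlocks_zero, fromBlocks_one]

theorem blk4_diag (a d : Matrix Unit Unit R) (b c : Matrix (Fin h) (Fin h) R) :
    blk4 a 0 0 0 0 b 0 0 0 0 c 0 0 0 0 d =
      fromBlocks (fromBlocks a 0 0 b) 0 0 (fromBlocks c 0 0 d) := by
  simp only [blk4, fromBlocks_zero]

theorem weightScale_mul_map_periodB (φ : R →+* R) {c : R} {τ23 : Matrix (Fin h) Unit R}
    (hτ : τ23.map φ = c • τ23) :
    weightScale c * (periodB τ23).map φ = periodB τ23 * weightScale c := by
  have hτT : τ23ᵀ.map φ = c • τ23ᵀ := by rw [transpose_map, hτ, transpose_smul]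
  simp only [weightScale, periodB, blk4_diag, blk4_eq_fromBlocks_blockUnipotent, fromBlocks_map,
    blockUnipotent_map _ φ (map_zero φ) (map_one φ), Matrix.map_zero _ (map_zero φ),
    fromBlocks_diag_mul_fromBlocks_diag, hτ, hτT]
  congr 1
  · refine fromBlocks_diag_mul_blockUnipotent_eq ?_
    simp
  · refine fromBlocks_diag_mul_blockUnipotent_eq ?_
    simp [smul_smul, ← pow_succ']

theorem weightScale_mul_map_periodC (φ : R →+* R) (c : R) [Invertible c]
    (τ12 : Matrix (Fin h) (Fin h) R) (τ13 : Matrix (Fin h) Unit R) (Z : Matrix Unit Unit R) :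
    weightScale c * (periodC τ12 τ13 Z).map φ =
      periodC τ12 τ13 Z * frobCorrection φ c τ12 τ13 Z * weightScale c := by
  simp only [weightScale, periodC, frobCorrection, blk4_diag, blk4_eq_blockUnipotent,
    blockUnipotent_map _ φ (map_zero φ) (map_one φ), fromBlocks_map,
    blockUnipotent_mul_blockUnipotent]
  have hc₂ : c ^ 2 * ⅟c = c := by rw [sq, mul_assoc, mul_invOf_self, mul_one]
  have hc₃ : c ^ 3 * ⅟c ^ 2 = c := by
    rw [pow_succ', mul_assoc, ← mul_pow, mul_invOf_self, one_pow, mul_one]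
  refine fromBlocks_diag_mul_blockUnipotent_eq ?_
  simp [fromBlocks_multiply, fromBlocks_add, Matrix.map_neg _ (map_neg φ), smul_smul,
    ← mul_pow, hc₂, hc₃, sub_eq_add_neg]

theorem frobCorrection_mul_weightScale_apply (φ : R →+* R) (c : R) [Invertible c]
    (τ12 : Matrix (Fin h) (Fin h) R) (τ13 : Matrix (Fin h) Unit R) (Z : Matrix Unit Unit R) :
    (frobCorrection φ c τ12 τ13 Z * weightScale c :
        Matrix ((Unit ⊕ Fin h) ⊕ (Fin h ⊕ Unit)) ((Unit ⊕ Fin h) ⊕ (Fin h ⊕ Unit)) R)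
      (Sum.inl (Sum.inl ())) (Sum.inr (Sum.inr ())) =
      (Z.map φ) () () - c ^ 3 * Z () () := by
  simp only [frobCorrection, weightScale, blk4_eq_blockUnipotent, blk4_diag,
    blockUnipotent_mul_fromBlocks_diag]
  simp only [fromBlocks_multiply, fromBlocks_apply₁₂, Matrix.mul_zero, Matrix.mul_smul,
    Matrix.mul_one, zero_add, Matrix.smul_apply, Matrix.sub_apply, map_apply, smul_eq_mul]
  rw [mul_sub, ← mul_assoc, ← mul_pow, mul_invOf_self, one_pow, one_mul]

end PeriodMatrix

theorem stmt_13_general (p : ℕ) (R : Type*) [CommRing R]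
    [Invertible (p : R)] (φ : R →+* R) (h : ℕ)
    (τ12 : Matrix (Fin h) (Fin h) R) (τ13 τ23 : Matrix (Fin h) Unit R)
    (Z : Matrix Unit Unit R)
    (𝒯 B C P U : Matrix ((Unit ⊕ Fin h) ⊕ (Fin h ⊕ Unit)) ((Unit ⊕ Fin h) ⊕ (Fin h ⊕ Unit)) R)
    (hB : B = blk4 1 τ23ᵀ 0 0 0 1 0 0 0 0 1 τ23 0 0 0 1)
    (hC : C = blk4 1 0 (-τ13ᵀ) Z 0 1 τ12 τ13 0 0 1 0 0 0 0 1)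
    (h𝒯 : 𝒯 = B * C)
    (hP : P = blk4 1 0 0 0
      0 ((p : R) • 1) 0 0
      0 0 ((p : R) ^ 2 • 1) 0
      0 0 0 ((p : R) ^ 3 • 1))
    (hU : U = blk4 1 0 (τ13ᵀ - (⅟(p : R)) ^ 2 • (τ13ᵀ.map φ))
        ((⅟(p : R)) ^ 3 • (Z.map φ) - Z)
      0 1 ((⅟(p : R)) • (τ12.map φ) - τ12) ((⅟(p : R)) ^ 2 • (τ13.map φ) - τ13)
      0 0 1 0
      0 0 0 1)
    (hτ23 : τ23.map φ = (p : R) • τ23) :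
    P * (𝒯.map φ) = 𝒯 * U * P ∧
    (U * P) (Sum.inl (Sum.inl ())) (Sum.inr (Sum.inr ())) =
      (Z.map φ) () () - (p : R) ^ 3 * Z () () := by
  have hPB : P * B.map φ = B * P := by
    rw [hP, hB]; exact weightScale_mul_map_periodB φ hτ23
  have hPC : P * C.map φ = C * U * P := by
    rw [hP, hC, hU]; exact weightScale_mul_map_periodC φ (p : R) τ12 τ13 Z
  subst h𝒯
  refine ⟨?_, by rw [hU, hP]; exact frobCorrection_mul_weightScale_apply φ (p : R) τ12 τ13 Z⟩
  calc P * (B * C).map φ = P * B.map φ * C.map φ := by rw [Matrix.map_mul, mul_assoc]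
    _ = B * (P * C.map φ) := by rw [hPB, mul_assoc]
    _ = B * C * U * P := by rw [hPC]; simp only [mul_assoc]

/-- For the canonical lift of Frobenius (`φ(τ23) = p·τ23`) one has
`P·φ(𝒯) = 𝒯·U·P` with `U` as in Formula (eq:matcanfrob); in particular the
entry of `U·P` in row `0` and column `2h+1` equals `φ(Z) − p³·Z`. -/
theorem stmt_13 (p : ℕ) (hp : p.Prime) (R : Type*) [CommRing R]
    [Invertible (p : R)] (φ : R →+* R) (h : ℕ) (hh : 1 ≤ h)
    (τ12 : Matrix (Fin h) (Fin h) R) (τ13 τ23 : Matrix (Fin h) Unit R)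
    (Z : Matrix Unit Unit R)
    (𝒯 B C P U : Matrix ((Unit ⊕ Fin h) ⊕ (Fin h ⊕ Unit)) ((Unit ⊕ Fin h) ⊕ (Fin h ⊕ Unit)) R)
    (hB : B = blk4 1 τ23ᵀ 0 0 0 1 0 0 0 0 1 τ23 0 0 0 1)
    (hC : C = blk4 1 0 (-τ13ᵀ) Z 0 1 τ12 τ13 0 0 1 0 0 0 0 1)
    (h𝒯 : 𝒯 = B * C)
    (hP : P = blk4 1 0 0 0
      0 ((p : R) • 1) 0 0
      0 0 ((p : R) ^ 2 • 1) 0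
      0 0 0 ((p : R) ^ 3 • 1))
    (hU : U = blk4 1 0 (τ13ᵀ - (⅟(p : R)) ^ 2 • (τ13ᵀ.map φ))
        ((⅟(p : R)) ^ 3 • (Z.map φ) - Z)
      0 1 ((⅟(p : R)) • (τ12.map φ) - τ12) ((⅟(p : R)) ^ 2 • (τ13.map φ) - τ13)
      0 0 1 0
      0 0 0 1)
    (hτ23 : τ23.map φ = (p : R) • τ23) :
    P * (𝒯.map φ) = 𝒯 * U * P ∧
    (U * P) (Sum.inl (Sum.inl ())) (Sum.inr (Sum.inr ())) =
      (Z.map φ) () () - (p : R) ^ 3 * Z () () :=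
  stmt_13_general p R φ h τ12 τ13 τ23 Z 𝒯 B C P U hB hC h𝒯 hP hU hτ23
end

section
/- Let p be a prime, k an algebraically closed field of characteristic p, W = 𝕎(k) its ring of Witt vectors with Frobenius endomorphism σ, and A = W[[t_1, …, t_n]]. Let φ : A → A be the operator φ(Σ_d a_d t^d) = Σ_d σ(a_d) t^{p·d}. Suppose f ∈ A is an invertible power series, c ∈ W, and g ∈ A has constant coefficient 1, and that φ(f) = c·g·f. Then there exist a ∈ W and f̃ ∈ A with constant coefficient 1 such that f̃ = g·φ(f̃) and f·f̃ = a (a constant power series); in particular f = a·f̃^{−1} with f̃ invertible in A. -/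
/-!
Taking constant coefficients in `φ(f) = c·g·f` gives `σ(a) = c·a` for `a = f(0)`. Since `φ` is
multiplicative and acts on constants through `σ`, the normalised inverse `f̃ = a·f⁻¹` then satisfies
`g·φ(f̃) = g·σ(a)·φ(f)⁻¹ = g·c·a·(c·g·f)⁻¹ = f̃`, and its constant coefficient is `a·a⁻¹ = 1`.
-/

open MvPowerSeries

namespace MvPowerSeries

variable {ι R : Type*} [CommRing R]

/-- `φ (∑ a_d t^d) = ∑ σ(a_d) t^(p•d)`, described through the coefficients of `φ f`. -/
structure IsFrobeniusLift (p : ℕ) (σ : R →+* R)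
    (φ : MvPowerSeries ι R → MvPowerSeries ι R) : Prop where
  coeff_nsmul : ∀ f d, coeff (p • d) (φ f) = σ (coeff d f)
  coeff_of_not_nsmul : ∀ f d, (¬ ∃ e : ι →₀ ℕ, d = p • e) → coeff d (φ f) = 0

namespace IsFrobeniusLift

variable {p : ℕ} {σ : R →+* R} {φ : MvPowerSeries ι R → MvPowerSeries ι R}

theorem constantCoeff_apply (hφ : IsFrobeniusLift p σ φ) (f : MvPowerSeries ι R) :
    constantCoeff (φ f) = σ (constantCoeff f) := by
  simpa using hφ.coeff_nsmul f 0

theorem map_C (hφ : IsFrobeniusLift p σ φ) (hp : p ≠ 0) (a : R) :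
    φ (C a) = C (σ a) := by
  classical
  ext d
  by_cases hd : ∃ e : ι →₀ ℕ, d = p • e
  · obtain ⟨e, rfl⟩ := hd
    have hpe : p • e = 0 ↔ e = 0 := (nsmul_right_injective hp).eq_iff' (smul_zero p)
    simp only [hφ.coeff_nsmul, coeff_C, hpe]
    split_ifs <;> simp
  · rw [hφ.coeff_of_not_nsmul _ _ hd, coeff_C, if_neg]
    rintro rfl
    exact hd ⟨0, (smul_zero p).symm⟩

theorem map_one (hφ : IsFrobeniusLift p σ φ) (hp : p ≠ 0) :
    φ 1 = 1 := by
  simpa using hφ.map_C hp 1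

/-- Only pairs of multiples of `p` contribute to `coeff d (φ x * φ y)`, and these are exactly the
images under `p • ·` of the pairs contributing to `coeff e (x * y)`, when `d = p • e`. -/
theorem map_mul (hφ : IsFrobeniusLift p σ φ) (hp : p ≠ 0) (x y : MvPowerSeries ι R) :
    φ (x * y) = φ x * φ y := by
  classical
  have hinj := nsmul_right_injective (M := ι →₀ ℕ) hp
  have multiples_of_ne_zero : ∀ q : (ι →₀ ℕ) × (ι →₀ ℕ),
      coeff q.1 (φ x) * coeff q.2 (φ y) ≠ 0 →
        ∃ u v : ι →₀ ℕ, q.1 = p • u ∧ q.2 = p • v := by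
    intro q hq
    by_contra! h
    by_cases h₁ : ∃ u, q.1 = p • u
    · obtain ⟨u, hu⟩ := h₁
      exact hq (by rw [hφ.coeff_of_not_nsmul y q.2 (fun ⟨v, hv⟩ => h u v hu hv), mul_zero])
    · exact hq (by rw [hφ.coeff_of_not_nsmul x q.1 h₁, zero_mul])
  ext d
  rw [coeff_mul]
  by_cases hd : ∃ e : ι →₀ ℕ, d = p • e
  · obtain ⟨e, rfl⟩ := hd
    rw [hφ.coeff_nsmul, coeff_mul, map_sum]
    refine Finset.sum_bij_ne_zero (fun q _ _ => (p • q.1, p • q.2)) ?_ ?_ ?_ ?_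
    · intro q hq _
      rw [Finset.HasAntidiagonal.mem_antidiagonal] at hq ⊢
      rw [← smul_add, hq]
    · intro q _ _ q' _ _ h
      simp only [Prod.mk.injEq] at h
      exact Prod.ext (hinj h.1) (hinj h.2)
    · intro q hq hne
      obtain ⟨u, v, hu, hv⟩ := multiples_of_ne_zero q hne
      rw [Finset.HasAntidiagonal.mem_antidiagonal, hu, hv, ← smul_add] at hq
      refine ⟨(u, v), Finset.HasAntidiagonal.mem_antidiagonal.mpr (hinj hq), ?_,
        Prod.ext hu.symm hv.symm⟩
      rwa [_root_.map_mul, ← hφ.coeff_nsmul, ← hφ.coeff_nsmul, ← hu, ← hv]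
    · intro q _ _
      dsimp only
      rw [hφ.coeff_nsmul, hφ.coeff_nsmul, _root_.map_mul]
  · rw [hφ.coeff_of_not_nsmul _ _ hd, eq_comm]
    refine Finset.sum_eq_zero fun q hq => ?_
    by_contra hne
    obtain ⟨u, v, hu, hv⟩ := multiples_of_ne_zero q hne
    rw [Finset.HasAntidiagonal.mem_antidiagonal, hu, hv, ← smul_add] at hq
    exact hd ⟨u + v, hq.symm⟩

theorem apply_mul_apply_inv (hφ : IsFrobeniusLift p σ φ) (hp : p ≠ 0)
    (u : (MvPowerSeries ι R)ˣ) : φ u * φ ↑u⁻¹ = 1 := by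
  rw [← hφ.map_mul hp, u.mul_inv, hφ.map_one hp]

variable {c : R} {g : MvPowerSeries ι R}

theorem apply_eq_constantCoeff_mul (hφ : IsFrobeniusLift p σ φ) {f : MvPowerSeries ι R}
    (hg : constantCoeff g = 1) (hfrob : φ f = C c * g * f) :
    σ (constantCoeff f) = c * constantCoeff f := by
  simpa [hφ.constantCoeff_apply, hg] using congrArg constantCoeff hfrob

theorem C_mul_apply_inv (hφ : IsFrobeniusLift p σ φ) (hp : p ≠ 0) {u : (MvPowerSeries ι R)ˣ}
    (hfrob : φ u = C c * g * (u : MvPowerSeries ι R)) :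
    C c * g * φ ↑u⁻¹ = (↑u⁻¹ : MvPowerSeries ι R) := by
  calc C c * g * φ ↑u⁻¹ = C c * g * φ ↑u⁻¹ * ((u : MvPowerSeries ι R) * ↑u⁻¹) := by
        rw [u.mul_inv, mul_one]
    _ = φ u * φ ↑u⁻¹ * ↑u⁻¹ := by rw [hfrob]; ring
    _ = ↑u⁻¹ := by rw [hφ.apply_mul_apply_inv hp, one_mul]

theorem eq_mul_apply_C_mul_inv (hφ : IsFrobeniusLift p σ φ) (hp : p ≠ 0)
    {u : (MvPowerSeries ι R)ˣ} (hg : constantCoeff g = 1)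
    (hfrob : φ u = C c * g * (u : MvPowerSeries ι R)) :
    C (constantCoeff (u : MvPowerSeries ι R)) * (↑u⁻¹ : MvPowerSeries ι R) =
      g * φ (C (constantCoeff (u : MvPowerSeries ι R)) * (↑u⁻¹ : MvPowerSeries ι R)) := by
  set a := constantCoeff (u : MvPowerSeries ι R)
  calc C a * (↑u⁻¹ : MvPowerSeries ι R) = C a * (C c * g * φ ↑u⁻¹) := by
        rw [hφ.C_mul_apply_inv hp hfrob]
    _ = g * (C (c * a) * φ ↑u⁻¹) := by rw [_root_.map_mul]; ring
    _ = g * φ (C a * ↑u⁻¹) := by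
        rw [hφ.map_mul hp, hφ.map_C hp, hφ.apply_eq_constantCoeff_mul hg hfrob]

end IsFrobeniusLift

theorem constantCoeff_C_constantCoeff_mul_inv (u : (MvPowerSeries ι R)ˣ) :
    constantCoeff (C (constantCoeff (u : MvPowerSeries ι R)) * (↑u⁻¹ : MvPowerSeries ι R)) =
      1 := by
  rw [map_mul, constantCoeff_C, ← map_mul, u.mul_inv, map_one]

end MvPowerSeries

open MvPowerSeries in
theorem stmt_16_general (p : ℕ) [Fact p.Prime] (k : Type*) [Field k] (n : ℕ)
    (φ : MvPowerSeries (Fin n) (WittVector p k) → MvPowerSeries (Fin n) (WittVector p k))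
    (hφ : ∀ (f : MvPowerSeries (Fin n) (WittVector p k)) (d : Fin n →₀ ℕ),
      coeff (R := WittVector p k) (p • d) (φ f) =
        WittVector.frobenius (coeff (R := WittVector p k) d f))
    (hφ0 : ∀ (f : MvPowerSeries (Fin n) (WittVector p k)) (d : Fin n →₀ ℕ),
      (¬ ∃ e : Fin n →₀ ℕ, d = p • e) → coeff (R := WittVector p k) d (φ f) = 0)
    (f : MvPowerSeries (Fin n) (WittVector p k)) (hf : IsUnit f)
    (c : WittVector p k)
    (g : MvPowerSeries (Fin n) (WittVector p k))
    (hg : constantCoeff (σ := Fin n) (R := WittVector p k) g = 1)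
    (hfrob : φ f = C (σ := Fin n) (R := WittVector p k) c * g * f) :
    ∃ (a : WittVector p k) (ftilde : MvPowerSeries (Fin n) (WittVector p k)),
      constantCoeff (σ := Fin n) (R := WittVector p k) ftilde = 1 ∧
      ftilde = g * φ ftilde ∧
      f * ftilde = C (σ := Fin n) (R := WittVector p k) a ∧
      IsUnit ftilde := by
  obtain ⟨u, rfl⟩ := hf
  have hlift : IsFrobeniusLift p WittVector.frobenius φ := ⟨hφ, hφ0⟩
  have hp : p ≠ 0 := (Fact.out : p.Prime).ne_zero
  have hcc := constantCoeff_C_constantCoeff_mul_inv u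
  refine ⟨constantCoeff (u : MvPowerSeries (Fin n) (WittVector p k)), _, hcc,
    hlift.eq_mul_apply_C_mul_inv hp hg hfrob, ?_, isUnit_iff_constantCoeff.mpr (hcc ▸ isUnit_one)⟩
  rw [mul_left_comm, u.mul_inv, mul_one]

open MvPowerSeries in
/-- Over `A = W[[t_1,…,t_n]]`, `W = 𝕎(k)` with `k` algebraically closed of
characteristic `p`, let `φ` apply the Frobenius `σ` of `W` coefficientwise and
replace `t^d` by `t^{pd}`.  If `f ∈ A` is invertible, `c ∈ W`, `g ∈ A` has
constant coefficient `1`, and `φ(f) = c·g·f`, then there are `a ∈ W` and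
`f̃ ∈ A` with constant coefficient `1` such that `f̃ = g·φ(f̃)` and
`f·f̃ = a`; in particular `f = a·f̃⁻¹` with `f̃` invertible in `A`. -/
theorem stmt_16 (p : ℕ) [Fact p.Prime] (k : Type*) [Field k] [IsAlgClosed k]
    [CharP k p] (n : ℕ)
    (φ : MvPowerSeries (Fin n) (WittVector p k) → MvPowerSeries (Fin n) (WittVector p k))
    (hφ : ∀ (f : MvPowerSeries (Fin n) (WittVector p k)) (d : Fin n →₀ ℕ),
      coeff (R := WittVector p k) (p • d) (φ f) =
        WittVector.frobenius (coeff (R := WittVector p k) d f))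
    (hφ0 : ∀ (f : MvPowerSeries (Fin n) (WittVector p k)) (d : Fin n →₀ ℕ),
      (¬ ∃ e : Fin n →₀ ℕ, d = p • e) → coeff (R := WittVector p k) d (φ f) = 0)
    (f : MvPowerSeries (Fin n) (WittVector p k)) (hf : IsUnit f)
    (c : WittVector p k)
    (g : MvPowerSeries (Fin n) (WittVector p k))
    (hg : constantCoeff (σ := Fin n) (R := WittVector p k) g = 1)
    (hfrob : φ f = C (σ := Fin n) (R := WittVector p k) c * g * f) :
    ∃ (a : WittVector p k) (ftilde : MvPowerSeries (Fin n) (WittVector p k)),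
      constantCoeff (σ := Fin n) (R := WittVector p k) ftilde = 1 ∧
      ftilde = g * φ ftilde ∧
      f * ftilde = C (σ := Fin n) (R := WittVector p k) a ∧
      IsUnit ftilde :=
  stmt_16_general p k n φ hφ hφ0 f hf c g hg hfrob
end
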